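/- arXiv:2603.02043 — 8 statements merged into one kernel-verified Lean document; each statement's English description precedes it below -/
import Mathlib

section
/- Single-tolerance level-set aggregation guarantee: Suppose the aggregation rule Agg is μ-stable, and that (ℋ, ℓ) satisfies the local level-set growth condition with parameters (μ, t, Δ, C_g) for some t ≥ 0, Δ > 0, C_g ≥ 1. Let ŷ_{t,i} := Agg(ℋ_{t,i}, x_i) for each i. Then (1/n) Σ_{i=1}^n ℓ(ŷ_{t,i}, y_i) ≤ (C_g/n)·(min_{h∈ℋ} L_S(h) + t + Δ). -/
open MeasureTheory

/-!
Each prediction is bounded, by `μ`-stability, by the average of its loss over `ℋ_{t,i}`.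
Since `ℋ_{t-Δ} ⊆ ℋ_{t,i} ⊆ ℋ_{t+Δ}`, that average is at most the integral over `ℋ_{t+Δ}`
divided by `μ(ℋ_{t-Δ})`. Summing over `i` turns the integrands into `L_S ≤ min L_S + t + Δ`
on `ℋ_{t+Δ}`, and the growth condition bounds the ratio `μ(ℋ_{t+Δ}) / μ(ℋ_{t-Δ})` by `C_g`.
-/

section

variable {H ι : Type*} [MeasurableSpace H] {μ : Measure H}

theorem setAverage_le_of_subset_of_subset {f : H → ℝ} {A G B : Set H}
    (hA : 0 < μ A) (hG : μ G ≠ ⊤) (hAG : A ⊆ G) (hGB : G ⊆ B)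
    (hf : IntegrableOn f B μ) (hf0 : 0 ≤ f) :
    (μ.real G)⁻¹ * ∫ h in G, f h ∂μ ≤ (μ.real A)⁻¹ * ∫ h in B, f h ∂μ := by
  have hAreal : 0 < μ.real A :=
    ENNReal.toReal_pos hA.ne' (ne_top_of_le_ne_top hG (measure_mono hAG))
  exact mul_le_mul (inv_anti₀ hAreal (measureReal_mono hAG hG))
    (setIntegral_mono_set hf (.of_forall hf0) hGB.eventuallyLE)
    (setIntegral_nonneg_of_ae (.of_forall hf0)) (inv_nonneg.2 measureReal_nonneg)

theorem sum_setAverage_le {s : Finset ι} {f : ι → H → ℝ} {G : ι → Set H} {A B : Set H}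
    {M : ℝ} (hB : MeasurableSet B) (hBfin : μ B ≠ ⊤) (hA : 0 < μ A)
    (hAG : ∀ i ∈ s, A ⊆ G i) (hGB : ∀ i ∈ s, G i ⊆ B)
    (hf : ∀ i ∈ s, AEStronglyMeasurable (f i) μ) (hf0 : ∀ i ∈ s, 0 ≤ f i)
    (hM : ∀ h ∈ B, ∑ i ∈ s, f i h ≤ M) :
    ∑ i ∈ s, (μ.real (G i))⁻¹ * ∫ h in G i, f i h ∂μ ≤ μ.real B / μ.real A * M := by
  have hsum0 : ∀ h, 0 ≤ ∑ i ∈ s, f i h := fun h => Finset.sum_nonneg fun i hi => hf0 i hi h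
  have hint : ∀ i ∈ s, IntegrableOn (f i) B μ := fun i hi =>
    Measure.integrableOn_of_bounded hBfin (hf i hi) <| ae_restrict_of_forall_mem hB fun h hh => by
      rw [Real.norm_of_nonneg (hf0 i hi h)]
      exact (Finset.single_le_sum (fun j hj => hf0 j hj h) hi).trans (hM h hh)
  have hsumB : ∫ h in B, ∑ i ∈ s, f i h ∂μ ≤ M * μ.real B :=
    (le_abs_self _).trans <| norm_setIntegral_le_of_norm_le_const hBfin.lt_top fun h hh => by
      rw [Real.norm_of_nonneg (hsum0 h)]
      exact hM h hh
  calc ∑ i ∈ s, (μ.real (G i))⁻¹ * ∫ h in G i, f i h ∂μ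
      ≤ ∑ i ∈ s, (μ.real A)⁻¹ * ∫ h in B, f i h ∂μ :=
        Finset.sum_le_sum fun i hi => setAverage_le_of_subset_of_subset hA
          (ne_top_of_le_ne_top hBfin (measure_mono (hGB i hi))) (hAG i hi) (hGB i hi)
          (hint i hi) (hf0 i hi)
    _ = (μ.real A)⁻¹ * ∫ h in B, ∑ i ∈ s, f i h ∂μ := by
        rw [← Finset.mul_sum, integral_finsetSum s hint]
    _ ≤ (μ.real A)⁻¹ * (M * μ.real B) := by gcongr
    _ = μ.real B / μ.real A * M := by ring

end

theorem single_tolerance_levelset_aggregation_general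
    {𝒳 𝒴 𝒴' H : Type*} [MeasurableSpace H] (μ : Measure H)
    {n : ℕ} (x : Fin n → 𝒳) (y : Fin n → 𝒴)
    (eval : H → 𝒳 → 𝒴') (ℓ : 𝒴' → 𝒴 → ℝ)
    (hℓpos : ∀ (y' : 𝒴') (yy : 𝒴), 0 ≤ ℓ y' yy)
    (hmeas : ∀ i : Fin n, Measurable fun h : H => ℓ (eval h (x i)) (y i))
    (LS : H → ℝ) (hLS : ∀ h, LS h = ∑ i, ℓ (eval h (x i)) (y i))
    (g : H)
    (Ht : ℝ → Set H) (hHt : ∀ s, Ht s = {h : H | LS h ≤ LS g + s})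
    (Hti : ℝ → Fin n → Set H)
    (hHtMeas : ∀ s, MeasurableSet (Ht s))
    (hHtiMeas : ∀ s i, MeasurableSet (Hti s i))
    (Agg : Set H → 𝒳 → 𝒴')
    -- μ-stability of the aggregation rule
    (hAgg : ∀ (G : Set H) (xx : 𝒳) (yy : 𝒴), MeasurableSet G → 0 < μ G → μ G < ⊤ →
      ℓ (Agg G xx) yy ≤ (μ G).toReal⁻¹ * ∫ h in G, ℓ (eval h xx) yy ∂μ)
    (t Δ Cg : ℝ) (ht : 0 ≤ t) (hΔ : 0 < Δ)
    -- local level-set growth condition with parameters (μ, t, Δ, Cg)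
    (hlow : 0 < μ (Ht (t - Δ))) (hhigh : μ (Ht (t + Δ)) < ⊤)
    (hgrowth : (μ (Ht (t + Δ))).toReal ≤ Cg * (μ (Ht (t - Δ))).toReal)
    (hsand : ∀ i : Fin n, Ht (t - Δ) ⊆ Hti t i ∧ Hti t i ⊆ Ht (t + Δ)) :
    (1 / (n : ℝ)) * ∑ i, ℓ (Agg (Hti t i) (x i)) (y i)
      ≤ (Cg / (n : ℝ)) * (LS g + t + Δ) := by
  have hmono : Ht (t - Δ) ⊆ Ht (t + Δ) := by
    rw [hHt, hHt]
    exact fun h (hh : LS h ≤ LS g + (t - Δ)) => hh.trans (by linarith)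
  have hratio : μ.real (Ht (t + Δ)) / μ.real (Ht (t - Δ)) ≤ Cg :=
    (div_le_iff₀ (ENNReal.toReal_pos hlow.ne' ((measure_mono hmono).trans_lt hhigh).ne)).2
      hgrowth
  have hLS_le : ∀ h ∈ Ht (t + Δ), ∑ i, ℓ (eval h (x i)) (y i) ≤ LS g + t + Δ := by
    intro h hh
    rw [hHt] at hh
    rw [← hLS, add_assoc]
    exact hh
  have hbound_nonneg : 0 ≤ LS g + t + Δ := by
    have : 0 ≤ LS g := hLS g ▸ Finset.sum_nonneg fun i _ => hℓpos _ _
    linarith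
  calc (1 / (n : ℝ)) * ∑ i, ℓ (Agg (Hti t i) (x i)) (y i)
      ≤ (1 / (n : ℝ)) * ∑ i,
          (μ.real (Hti t i))⁻¹ * ∫ h in Hti t i, ℓ (eval h (x i)) (y i) ∂μ := by
        gcongr with i
        exact hAgg _ _ _ (hHtiMeas t i) (hlow.trans_le (measure_mono (hsand i).1))
          ((measure_mono (hsand i).2).trans_lt hhigh)
    _ ≤ (1 / (n : ℝ)) * (μ.real (Ht (t + Δ)) / μ.real (Ht (t - Δ)) * (LS g + t + Δ)) := by
        gcongr
        exact sum_setAverage_le (hHtMeas (t + Δ)) hhigh.ne hlow (fun i _ => (hsand i).1)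
          (fun i _ => (hsand i).2) (fun i _ => (hmeas i).aestronglyMeasurable)
          (fun i _ _ => hℓpos _ _) hLS_le
    _ ≤ (1 / (n : ℝ)) * (Cg * (LS g + t + Δ)) := by gcongr
    _ = (Cg / (n : ℝ)) * (LS g + t + Δ) := by ring

/-- **Single-tolerance level-set aggregation guarantee.**
Setting: dataset `(x i, y i)`, hypothesis class `H` carrying a measure `μ`, loss `ℓ ≥ 0`,
full-sample risk `LS` and leave-one-out risks `LSm i` with attained minimizers `g`, `gm i`,
level sets `Ht t` and `Hti t i`.  The aggregation rule `Agg` is `μ`-stable, and `(H, ℓ)`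
satisfies the local level-set growth condition with parameters `(μ, t, Δ, Cg)`.
Then `(1/n) ∑ i ℓ(Agg(ℋ_{t,i}, x_i), y_i) ≤ (Cg/n)·(min_h LS(h) + t + Δ)`. -/
theorem single_tolerance_levelset_aggregation
    {𝒳 𝒴 𝒴' H : Type*} [MeasurableSpace H] (μ : Measure H)
    {n : ℕ} (hn : 0 < n) (x : Fin n → 𝒳) (y : Fin n → 𝒴)
    (eval : H → 𝒳 → 𝒴') (ℓ : 𝒴' → 𝒴 → ℝ)
    (hℓpos : ∀ (y' : 𝒴') (yy : 𝒴), 0 ≤ ℓ y' yy)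
    (hmeas : ∀ i : Fin n, Measurable fun h : H => ℓ (eval h (x i)) (y i))
    (LS : H → ℝ) (hLS : ∀ h, LS h = ∑ i, ℓ (eval h (x i)) (y i))
    (LSm : Fin n → H → ℝ)
    (hLSm : ∀ i h, LSm i h = ∑ j ∈ Finset.univ.erase i, ℓ (eval h (x j)) (y j))
    (g : H) (hg : ∀ h, LS g ≤ LS h)
    (gm : Fin n → H) (hgm : ∀ i h, LSm i (gm i) ≤ LSm i h)
    (Ht : ℝ → Set H) (hHt : ∀ s, Ht s = {h : H | LS h ≤ LS g + s})
    (Hti : ℝ → Fin n → Set H)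
    (hHti : ∀ s i, Hti s i = {h : H | LSm i h ≤ LSm i (gm i) + s})
    (hHtMeas : ∀ s, MeasurableSet (Ht s))
    (hHtiMeas : ∀ s i, MeasurableSet (Hti s i))
    (Agg : Set H → 𝒳 → 𝒴')
    -- μ-stability of the aggregation rule
    (hAgg : ∀ (G : Set H) (xx : 𝒳) (yy : 𝒴), MeasurableSet G → 0 < μ G → μ G < ⊤ →
      ℓ (Agg G xx) yy ≤ (μ G).toReal⁻¹ * ∫ h in G, ℓ (eval h xx) yy ∂μ)
    (t Δ Cg : ℝ) (ht : 0 ≤ t) (hΔ : 0 < Δ) (hCg : 1 ≤ Cg)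
    -- local level-set growth condition with parameters (μ, t, Δ, Cg)
    (hlow : 0 < μ (Ht (t - Δ))) (hhigh : μ (Ht (t + Δ)) < ⊤)
    (hgrowth : (μ (Ht (t + Δ))).toReal ≤ Cg * (μ (Ht (t - Δ))).toReal)
    (hsand : ∀ i : Fin n, Ht (t - Δ) ⊆ Hti t i ∧ Hti t i ⊆ Ht (t + Δ)) :
    (1 / (n : ℝ)) * ∑ i, ℓ (Agg (Hti t i) (x i)) (y i)
      ≤ (Cg / (n : ℝ)) * (LS g + t + Δ) :=
  single_tolerance_levelset_aggregation_general μ x y eval ℓ hℓpos hmeas LS hLS g Ht hHt Hti hHtMeas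
    hHtiMeas Agg hAgg t Δ Cg ht hΔ hlow hhigh hgrowth hsand
end

section
/- Main theorem (Median of Level-Set Aggregation): Assume the prediction space is ℝ and the loss ℓ : ℝ × 𝒴 → [0,∞) is either monotone in distance (ℓ(y'', y) ≥ ℓ(y', y) whenever |y''−y| ≥ |y'−y|, with 𝒴 ⊆ ℝ) or monotone in its first argument. Suppose the aggregation rule Agg is μ-stable, and suppose that for a finite nonempty tolerance set 𝒯 ⊂ [0,∞), some Δ > 0, C_g ≥ 1 and ρ ∈ (1/2, 1], at least ρ·|𝒯| of the tolerances t ∈ 𝒯 satisfy the local level-set growth condition with parameters (μ, t, Δ, C_g). For each i let ŷ_{t,i} := Agg(ℋ_{t,i}, x_i) and let ŷ_i be any median of {ŷ_{t,i}}_{t∈𝒯}. Then with t_max := max_{t∈𝒯} t, (1/n) Σ_{i=1}^n ℓ(ŷ_i, y_i) ≤ (2 C_g / ((2ρ−1) n)) · (min_{h∈ℋ} L_S(h) + t_max + Δ). -/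
/-!
For a good tolerance `t`, the sandwich `ℋ_{t-Δ} ⊆ ℋ_{t,i} ⊆ ℋ_{t+Δ}` and `μ`-stability bound the
loss of `ŷ_{t,i}` by the integral of `ℓ(h(x_i), y_i)` over `ℋ_{t+Δ}` divided by `μ(ℋ_{t-Δ})`.
Summing over `i` turns the integrand into `L_S ≤ min L_S + t + Δ`, so every good candidate has
total loss at most `C_g (min L_S + t_max + Δ)`. At most half of the candidates lie strictly on
either side of a median `ŷ_i`, and on one side of `ŷ_i` the loss is at least `ℓ(ŷ_i, y_i)`; hence
`ℓ(ŷ_i, y_i)` is dominated by at least `(ρ - 1/2)|𝒯|` good candidates, which gives the factor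
`2 / (2ρ - 1)`.
-/

open MeasureTheory Finset

def IsMedianOn {κ : Type*} (s : Finset κ) (a : κ → ℝ) (c : ℝ) : Prop :=
  ∀ d : ℝ, ∑ t ∈ s, |a t - c| ≤ ∑ t ∈ s, |a t - d|

theorem isMinOn_Ici_or_isMinOn_Iic {f : ℝ → ℝ}
    (hf : (∃ z, ∀ a b, |b - z| ≤ |a - z| → f b ≤ f a) ∨ Monotone f ∨ Antitone f) (c : ℝ) :
    IsMinOn f (Set.Ici c) c ∨ IsMinOn f (Set.Iic c) c := by
  rcases hf with ⟨z, hz⟩ | hf | hf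
  · rcases le_total z c with hzc | hcz
    · refine .inl <| isMinOn_iff.2 fun b (hb : c ≤ b) => hz _ _ ?_
      rw [abs_of_nonneg (by linarith), abs_of_nonneg (by linarith)]
      linarith
    · refine .inr <| isMinOn_iff.2 fun b (hb : b ≤ c) => hz _ _ ?_
      rw [abs_of_nonpos (by linarith), abs_of_nonpos (by linarith)]
      linarith
  · exact .inl <| isMinOn_iff.2 fun _ hb => hf hb
  · exact .inr <| isMinOn_iff.2 fun _ hb => hf hb

namespace IsMedianOn

variable {κ : Type*} {s : Finset κ} {a : κ → ℝ} {c : ℝ}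

theorem neg (h : IsMedianOn s a c) : IsMedianOn s (fun t => -a t) (-c) := fun d => by
  convert h (-d) using 2 <;> rw [← abs_neg] <;> ring_nf

/-- Moving `c` down to the largest value `d < c` gains `c - d` on each value below `c` and loses
`c - d` on each other one. -/
theorem two_mul_card_filter_lt_le (h : IsMedianOn s a c) :
    2 * #{t ∈ s | a t < c} ≤ #s := by
  set L := s.filter (a · < c)
  rcases L.eq_empty_or_nonempty with hL | hL
  · simp [L, hL]
  set d := L.sup' hL a
  have hdc : d < c := (sup'_lt_iff hL).2 fun t ht => (mem_filter.1 ht).2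
  have hbelow : ∀ t ∈ L, |a t - d| = |a t - c| - (c - d) := fun t ht => by
    have hle : a t ≤ d := L.le_sup' a ht
    rw [abs_of_nonpos (by linarith), abs_of_nonpos (by linarith)]
    ring
  have habove : ∀ t ∈ s.filter (¬ a · < c), |a t - d| = |a t - c| + (c - d) := fun t ht => by
    have hge := not_lt.1 (mem_filter.1 ht).2
    rw [abs_of_nonneg (by linarith), abs_of_nonneg (by linarith)]
    ring
  have hmin := h d
  rw [← sum_filter_add_sum_filter_not s (a · < c), ← sum_filter_add_sum_filter_not s (a · < c),
    sum_congr rfl hbelow, sum_congr rfl habove, sum_sub_distrib, sum_add_distrib] at hmin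
  have hcard := card_filter_add_card_filter_not (s := s) (a · < c)
  simp only [sum_const, nsmul_eq_mul] at hmin
  have : (2 * #L : ℝ) ≤ #s := by
    rw [← hcard]
    push_cast
    nlinarith
  exact_mod_cast this

theorem card_sub_half_mul_le_sum_of_isMinOn_Ici (h : IsMedianOn s a c) {G : Finset κ}
    (hGs : G ⊆ s) {f : ℝ → ℝ} (hf0 : ∀ b, 0 ≤ f b) (hf : IsMinOn f (Set.Ici c) c) :
    (#G - #s / 2 : ℝ) * f c ≤ ∑ t ∈ G, f (a t) := by
  set U := G.filter (c ≤ a ·)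
  have hcard : (#G - #s / 2 : ℝ) ≤ #U := by
    have hsplit : #U + #(G.filter (¬ c ≤ a ·)) = #G := card_filter_add_card_filter_not _
    have hbelow : #(G.filter (¬ c ≤ a ·)) ≤ #{t ∈ s | a t < c} :=
      card_le_card fun t ht => by
        simp only [mem_filter, not_le] at ht ⊢
        exact ⟨hGs ht.1, ht.2⟩
    have hhalf : (2 * #{t ∈ s | a t < c} : ℝ) ≤ #s := by
      exact_mod_cast h.two_mul_card_filter_lt_le
    have hbelow' : (#(G.filter (¬ c ≤ a ·)) : ℝ) ≤ #{t ∈ s | a t < c} := by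
      exact_mod_cast hbelow
    rw [← hsplit]
    push_cast
    linarith
  calc (#G - #s / 2 : ℝ) * f c ≤ #U * f c := mul_le_mul_of_nonneg_right hcard (hf0 c)
    _ = ∑ t ∈ U, f c := by rw [sum_const, nsmul_eq_mul]
    _ ≤ ∑ t ∈ U, f (a t) := sum_le_sum fun t ht => isMinOn_iff.1 hf _ (mem_filter.1 ht).2
    _ ≤ ∑ t ∈ G, f (a t) := sum_le_sum_of_subset_of_nonneg (filter_subset _ _) fun _ _ _ => hf0 _

theorem card_sub_half_mul_le_sum (h : IsMedianOn s a c) {G : Finset κ} (hGs : G ⊆ s)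
    {f : ℝ → ℝ} (hf0 : ∀ b, 0 ≤ f b) (hf : IsMinOn f (Set.Ici c) c ∨ IsMinOn f (Set.Iic c) c) :
    (#G - #s / 2 : ℝ) * f c ≤ ∑ t ∈ G, f (a t) := by
  rcases hf with hf | hf
  · exact h.card_sub_half_mul_le_sum_of_isMinOn_Ici hGs hf0 hf
  · simpa only [neg_neg] using h.neg.card_sub_half_mul_le_sum_of_isMinOn_Ici hGs
      (f := fun b => f (-b)) (fun _ => hf0 _)
      (isMinOn_iff.2 fun b hb => by
        rw [neg_neg]
        exact isMinOn_iff.1 hf _ (neg_le.1 (Set.mem_Ici.1 hb)))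

end IsMedianOn

theorem sum_le_of_isMedianOn {ι κ : Type*} [Fintype ι] {T G : Finset κ} (hGT : G ⊆ T)
    {ρ : ℝ} (hρ : 1 / 2 < ρ) (hG : ρ * #T ≤ #G) (hT : T.Nonempty) {a : κ → ι → ℝ}
    {c : ι → ℝ} (hmed : ∀ i, IsMedianOn T (a · i) (c i)) {f : ι → ℝ → ℝ}
    (hf0 : ∀ i b, 0 ≤ f i b)
    (hf : ∀ i, IsMinOn (f i) (Set.Ici (c i)) (c i) ∨ IsMinOn (f i) (Set.Iic (c i)) (c i))
    {B : ℝ} (hB : ∀ t ∈ G, ∑ i, f i (a t i) ≤ B) :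
    ∑ i, f i (c i) ≤ 2 * B / (2 * ρ - 1) := by
  have hT0 : (0 : ℝ) < #T := by exact_mod_cast hT.card_pos
  have hB0 : 0 ≤ B := by
    have hGpos : (0 : ℝ) < #G := (by positivity : 0 < ρ * #T).trans_le hG
    obtain ⟨t, ht⟩ : G.Nonempty := card_pos.1 (by exact_mod_cast hGpos)
    exact (sum_nonneg fun i _ => hf0 i _).trans (hB t ht)
  have hGT' : (#G : ℝ) ≤ #T := by exact_mod_cast card_le_card hGT
  have key : #T * ((ρ - 1 / 2) * ∑ i, f i (c i)) ≤ #T * B := calc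
    #T * ((ρ - 1 / 2) * ∑ i, f i (c i)) ≤ ∑ i, (#G - #T / 2 : ℝ) * f i (c i) := by
        rw [← mul_assoc, mul_sum]
        gcongr with i
        · exact hf0 i _
        · linarith
    _ ≤ ∑ i, ∑ t ∈ G, f i (a t i) :=
        sum_le_sum fun i _ => (hmed i).card_sub_half_mul_le_sum hGT (hf0 i) (hf i)
    _ = ∑ t ∈ G, ∑ i, f i (a t i) := sum_comm
    _ ≤ ∑ _t ∈ G, B := sum_le_sum hB
    _ = #G * B := by rw [sum_const, nsmul_eq_mul]
    _ ≤ #T * B := by gcongr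
  rw [le_div_iff₀ (by linarith)]
  linarith [le_of_mul_le_mul_left key hT0]

section LevelSetAverages

variable {H : Type*} [MeasurableSpace H] {μ : Measure H}

theorem inv_measure_mul_setIntegral_le_of_subset {f : H → ℝ} {A S B : Set H}
    (hf0 : ∀ h, 0 ≤ f h) (hf : IntegrableOn f B μ) (hAS : A ⊆ S) (hSB : S ⊆ B) (hA : 0 < μ A)
    (hB : μ B ≠ ⊤) :
    (μ S).toReal⁻¹ * ∫ h in S, f h ∂μ ≤ (μ A).toReal⁻¹ * ∫ h in B, f h ∂μ := by
  have hS : μ S ≠ ⊤ := ne_top_of_le_ne_top hB (measure_mono hSB)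
  have hA' : 0 < (μ A).toReal :=
    ENNReal.toReal_pos hA.ne' (ne_top_of_le_ne_top hS (measure_mono hAS))
  calc (μ S).toReal⁻¹ * ∫ h in S, f h ∂μ ≤ (μ A).toReal⁻¹ * ∫ h in S, f h ∂μ :=
        mul_le_mul_of_nonneg_right (inv_anti₀ hA' (ENNReal.toReal_mono hS (measure_mono hAS)))
          (integral_nonneg hf0)
    _ ≤ (μ A).toReal⁻¹ * ∫ h in B, f h ∂μ :=
        mul_le_mul_of_nonneg_left (setIntegral_mono_set hf (ae_of_all _ hf0) hSB.eventuallyLE)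
          (inv_nonneg.2 hA'.le)

theorem sum_inv_measure_mul_setIntegral_le {ι : Type*} [Fintype ι] {f : ι → H → ℝ}
    {S : ι → Set H} {A B : Set H} {C c : ℝ} (hf0 : ∀ i h, 0 ≤ f i h)
    (hfm : ∀ i, Measurable (f i)) (hBm : MeasurableSet B) (hAS : ∀ i, A ⊆ S i)
    (hSB : ∀ i, S i ⊆ B) (hAB : A ⊆ B) (hA : 0 < μ A) (hB : μ B ≠ ⊤)
    (hC : (μ B).toReal ≤ C * (μ A).toReal) (hfB : ∀ h ∈ B, ∑ i, f i h ≤ c) :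
    ∑ i, (μ (S i)).toReal⁻¹ * ∫ h in S i, f i h ∂μ ≤ C * c := by
  have hA' : 0 < (μ A).toReal :=
    ENNReal.toReal_pos hA.ne' (ne_top_of_le_ne_top hB (measure_mono hAB))
  have hc : 0 ≤ c := by
    obtain ⟨h, hh⟩ := nonempty_of_measure_ne_zero hA.ne'
    exact (sum_nonneg fun i _ => hf0 i h).trans (hfB h (hAB hh))
  have hint : ∀ i, IntegrableOn (f i) B μ := fun i =>
    IntegrableOn.of_bound hB.lt_top (hfm i).aestronglyMeasurable c <|
      ae_restrict_of_forall_mem hBm fun h hh => by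
        rw [Real.norm_of_nonneg (hf0 i h)]
        exact (single_le_sum (fun j _ => hf0 j h) (mem_univ i)).trans (hfB h hh)
  have hsum : ∫ h in B, ∑ i, f i h ∂μ ≤ (μ B).toReal * c := by
    refine (setIntegral_mono_on (integrable_finsetSum _ fun i _ => hint i)
      (integrableOn_const hB) hBm hfB).trans_eq ?_
    rw [setIntegral_const, smul_eq_mul, measureReal_def]
  calc ∑ i, (μ (S i)).toReal⁻¹ * ∫ h in S i, f i h ∂μ
      ≤ ∑ i, (μ A).toReal⁻¹ * ∫ h in B, f i h ∂μ := sum_le_sum fun i _ =>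
        inv_measure_mul_setIntegral_le_of_subset (hf0 i) (hint i) (hAS i) (hSB i) hA hB
    _ = (μ A).toReal⁻¹ * ∫ h in B, ∑ i, f i h ∂μ := by
        rw [← mul_sum, integral_finsetSum _ fun i _ => hint i]
    _ ≤ (μ A).toReal⁻¹ * ((C * (μ A).toReal) * c) := by gcongr; exact hsum.trans (by gcongr)
    _ = C * c := by field_simp

theorem sum_loss_aggregate_le_of_sandwich {ι 𝒳 𝒴 : Type*} [Fintype ι] {eval : H → 𝒳 → ℝ}
    {ℓ : ℝ → 𝒴 → ℝ} {Agg : Set H → 𝒳 → ℝ}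
    (hAgg : ∀ (G : Set H) (xx : 𝒳) (yy : 𝒴), MeasurableSet G → 0 < μ G → μ G < ⊤ →
      ℓ (Agg G xx) yy ≤ (μ G).toReal⁻¹ * ∫ h in G, ℓ (eval h xx) yy ∂μ)
    (hℓ0 : ∀ a yy, 0 ≤ ℓ a yy) {x : ι → 𝒳} {y : ι → 𝒴}
    (hmeas : ∀ i, Measurable fun h => ℓ (eval h (x i)) (y i)) {S : ι → Set H} {A B : Set H}
    {C c : ℝ} (hSm : ∀ i, MeasurableSet (S i)) (hBm : MeasurableSet B) (hAS : ∀ i, A ⊆ S i)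
    (hSB : ∀ i, S i ⊆ B) (hAB : A ⊆ B) (hA : 0 < μ A) (hB : μ B < ⊤)
    (hC : (μ B).toReal ≤ C * (μ A).toReal) (hLB : ∀ h ∈ B, ∑ i, ℓ (eval h (x i)) (y i) ≤ c) :
    ∑ i, ℓ (Agg (S i) (x i)) (y i) ≤ C * c := by
  refine (sum_le_sum fun i _ => hAgg _ _ _ (hSm i) (hA.trans_le (measure_mono (hAS i)))
    ((measure_mono (hSB i)).trans_lt hB)).trans ?_
  exact sum_inv_measure_mul_setIntegral_le (fun _ _ => hℓ0 _ _) hmeas hBm hAS hSB hAB hA hB.ne hC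
    hLB

end LevelSetAverages

theorem mlsa_main_general
    {𝒳 𝒴 H : Type*} [MeasurableSpace H] (μ : Measure H)
    {n : ℕ} (x : Fin n → 𝒳) (y : Fin n → 𝒴)
    (eval : H → 𝒳 → ℝ) (ℓ : ℝ → 𝒴 → ℝ)
    (hℓpos : ∀ (a : ℝ) (yy : 𝒴), 0 ≤ ℓ a yy)
    -- monotone in distance (with responses embedded in ℝ), or monotone in first argument
    (hmono : (∃ ι : 𝒴 → ℝ, ∀ (a b : ℝ) (yy : 𝒴), |b - ι yy| ≤ |a - ι yy| → ℓ b yy ≤ ℓ a yy)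
      ∨ (∀ yy : 𝒴, Monotone fun a : ℝ => ℓ a yy)
      ∨ (∀ yy : 𝒴, Antitone fun a : ℝ => ℓ a yy))
    (hmeas : ∀ i : Fin n, Measurable fun h : H => ℓ (eval h (x i)) (y i))
    (LS : H → ℝ) (hLS : ∀ h, LS h = ∑ i, ℓ (eval h (x i)) (y i))
    (g : H)
    (Ht : ℝ → Set H) (hHt : ∀ s, Ht s = {h : H | LS h ≤ LS g + s})
    (Hti : ℝ → Fin n → Set H)
    (hHtMeas : ∀ s, MeasurableSet (Ht s))
    (hHtiMeas : ∀ s i, MeasurableSet (Hti s i))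
    (Agg : Set H → 𝒳 → ℝ)
    -- μ-stability of the aggregation rule
    (hAgg : ∀ (G : Set H) (xx : 𝒳) (yy : 𝒴), MeasurableSet G → 0 < μ G → μ G < ⊤ →
      ℓ (Agg G xx) yy ≤ (μ G).toReal⁻¹ * ∫ h in G, ℓ (eval h xx) yy ∂μ)
    (T : Finset ℝ) (hTne : T.Nonempty)
    (Δ Cg ρ : ℝ) (hΔ : 0 < Δ) (hCg : 1 ≤ Cg) (hρ : 1 / 2 < ρ)
    -- the local level-set growth condition with parameters (μ, t, Δ, Cg)
    (Good : ℝ → Prop)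
    (hGood : ∀ t, Good t ↔ (0 < μ (Ht (t - Δ)) ∧ μ (Ht (t + Δ)) < ⊤ ∧
      (μ (Ht (t + Δ))).toReal ≤ Cg * (μ (Ht (t - Δ))).toReal ∧
      ∀ i : Fin n, Ht (t - Δ) ⊆ Hti t i ∧ Hti t i ⊆ Ht (t + Δ)))
    [DecidablePred Good]
    -- at least a ρ-fraction of tolerances in T are good
    (hGrid : ρ * T.card ≤ (T.filter Good).card)
    (yhatt : ℝ → Fin n → ℝ) (hyhatt : ∀ t i, yhatt t i = Agg (Hti t i) (x i))
    -- yhat i is a median of {yhatt t i}_{t ∈ T}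
    (yhat : Fin n → ℝ)
    (hmed : ∀ i : Fin n, ∀ c : ℝ, ∑ t ∈ T, |yhatt t i - yhat i| ≤ ∑ t ∈ T, |yhatt t i - c|) :
    (1 / (n : ℝ)) * ∑ i, ℓ (yhat i) (y i)
      ≤ (2 * Cg / ((2 * ρ - 1) * n)) * (LS g + T.max' hTne + Δ) := by
  have hgood : ∀ t ∈ T.filter Good,
      ∑ i, ℓ (yhatt t i) (y i) ≤ Cg * (LS g + T.max' hTne + Δ) := by
    intro t ht
    obtain ⟨htT, hGt⟩ := mem_filter.1 ht
    obtain ⟨hA, hB, hC, hsub⟩ := (hGood t).1 hGt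
    have hAB : Ht (t - Δ) ⊆ Ht (t + Δ) := by
      rw [hHt, hHt, Set.ofPred_subset_ofPred]
      intro h hh
      linarith
    simp only [hyhatt]
    calc ∑ i, ℓ (Agg (Hti t i) (x i)) (y i) ≤ Cg * (LS g + (t + Δ)) :=
          sum_loss_aggregate_le_of_sandwich hAgg hℓpos hmeas (hHtiMeas t) (hHtMeas _)
            (fun i => (hsub i).1) (fun i => (hsub i).2) hAB hA hB hC fun h hh => by
              rw [hHt] at hh
              rwa [← hLS]
      _ ≤ Cg * (LS g + T.max' hTne + Δ) := by
          have htmax := T.le_max' t htT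
          exact mul_le_mul_of_nonneg_left (by linarith) (by linarith)
  have hloss : ∀ i, IsMinOn (ℓ · (y i)) (Set.Ici (yhat i)) (yhat i) ∨
      IsMinOn (ℓ · (y i)) (Set.Iic (yhat i)) (yhat i) := fun i => by
    refine isMinOn_Ici_or_isMinOn_Iic ?_ _
    rcases hmono with ⟨ι, hι⟩ | hmon | hanti
    exacts [.inl ⟨ι (y i), fun a b => hι a b (y i)⟩, .inr (.inl (hmon _)), .inr (.inr (hanti _))]
  have hsum := sum_le_of_isMedianOn (filter_subset Good T) hρ hGrid hTne hmed
    (fun i b => hℓpos b (y i)) hloss hgood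
  calc (1 / (n : ℝ)) * ∑ i, ℓ (yhat i) (y i)
      ≤ (1 / (n : ℝ)) * (2 * (Cg * (LS g + T.max' hTne + Δ)) / (2 * ρ - 1)) := by gcongr
    _ = (2 * Cg / ((2 * ρ - 1) * n)) * (LS g + T.max' hTne + Δ) := by
        rw [mul_comm _ (n : ℝ), ← div_div]
        ring

/-- **Main theorem: Median of Level-Set Aggregation.**
Prediction space is `ℝ`; the loss is either monotone in distance (`𝒴 ⊆ ℝ`, encoded by a map
`ι : 𝒴 → ℝ`) or monotone in its first argument.  The aggregation rule is `μ`-stable, and at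
least a `ρ`-fraction (`ρ > 1/2`) of the tolerances in the finite grid `T ⊆ [0,∞)` satisfy
the local level-set growth condition with parameters `(μ, t, Δ, Cg)`.  For each `i`,
`yhat i` is a median of `{Agg(ℋ_{t,i}, x_i)}_{t ∈ T}`.  Then
`(1/n) ∑ i ℓ(yhat i, y i) ≤ (2 Cg / ((2ρ−1) n))·(min_h LS(h) + t_max + Δ)`. -/
theorem mlsa_main
    {𝒳 𝒴 H : Type*} [MeasurableSpace H] (μ : Measure H)
    {n : ℕ} (hn : 0 < n) (x : Fin n → 𝒳) (y : Fin n → 𝒴)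
    (eval : H → 𝒳 → ℝ) (ℓ : ℝ → 𝒴 → ℝ)
    (hℓpos : ∀ (a : ℝ) (yy : 𝒴), 0 ≤ ℓ a yy)
    -- monotone in distance (with responses embedded in ℝ), or monotone in first argument
    (hmono : (∃ ι : 𝒴 → ℝ, ∀ (a b : ℝ) (yy : 𝒴), |b - ι yy| ≤ |a - ι yy| → ℓ b yy ≤ ℓ a yy)
      ∨ (∀ yy : 𝒴, Monotone fun a : ℝ => ℓ a yy)
      ∨ (∀ yy : 𝒴, Antitone fun a : ℝ => ℓ a yy))
    (hmeas : ∀ i : Fin n, Measurable fun h : H => ℓ (eval h (x i)) (y i))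
    (LS : H → ℝ) (hLS : ∀ h, LS h = ∑ i, ℓ (eval h (x i)) (y i))
    (LSm : Fin n → H → ℝ)
    (hLSm : ∀ i h, LSm i h = ∑ j ∈ Finset.univ.erase i, ℓ (eval h (x j)) (y j))
    (g : H) (hg : ∀ h, LS g ≤ LS h)
    (gm : Fin n → H) (hgm : ∀ i h, LSm i (gm i) ≤ LSm i h)
    (Ht : ℝ → Set H) (hHt : ∀ s, Ht s = {h : H | LS h ≤ LS g + s})
    (Hti : ℝ → Fin n → Set H)
    (hHti : ∀ s i, Hti s i = {h : H | LSm i h ≤ LSm i (gm i) + s})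
    (hHtMeas : ∀ s, MeasurableSet (Ht s))
    (hHtiMeas : ∀ s i, MeasurableSet (Hti s i))
    (Agg : Set H → 𝒳 → ℝ)
    -- μ-stability of the aggregation rule
    (hAgg : ∀ (G : Set H) (xx : 𝒳) (yy : 𝒴), MeasurableSet G → 0 < μ G → μ G < ⊤ →
      ℓ (Agg G xx) yy ≤ (μ G).toReal⁻¹ * ∫ h in G, ℓ (eval h xx) yy ∂μ)
    (T : Finset ℝ) (hTne : T.Nonempty) (hTnonneg : ∀ t ∈ T, 0 ≤ t)
    (Δ Cg ρ : ℝ) (hΔ : 0 < Δ) (hCg : 1 ≤ Cg) (hρ : 1 / 2 < ρ) (hρ1 : ρ ≤ 1)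
    -- the local level-set growth condition with parameters (μ, t, Δ, Cg)
    (Good : ℝ → Prop)
    (hGood : ∀ t, Good t ↔ (0 < μ (Ht (t - Δ)) ∧ μ (Ht (t + Δ)) < ⊤ ∧
      (μ (Ht (t + Δ))).toReal ≤ Cg * (μ (Ht (t - Δ))).toReal ∧
      ∀ i : Fin n, Ht (t - Δ) ⊆ Hti t i ∧ Hti t i ⊆ Ht (t + Δ)))
    [DecidablePred Good]
    -- at least a ρ-fraction of tolerances in T are good
    (hGrid : ρ * T.card ≤ (T.filter Good).card)
    (yhatt : ℝ → Fin n → ℝ) (hyhatt : ∀ t i, yhatt t i = Agg (Hti t i) (x i))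
    -- yhat i is a median of {yhatt t i}_{t ∈ T}
    (yhat : Fin n → ℝ)
    (hmed : ∀ i : Fin n, ∀ c : ℝ, ∑ t ∈ T, |yhatt t i - yhat i| ≤ ∑ t ∈ T, |yhatt t i - c|) :
    (1 / (n : ℝ)) * ∑ i, ℓ (yhat i) (y i)
      ≤ (2 * Cg / ((2 * ρ - 1) * n)) * (LS g + T.max' hTne + Δ) :=
  mlsa_main_general μ x y eval ℓ hℓpos hmono hmeas LS hLS g Ht hHt Hti hHtMeas hHtiMeas Agg hAgg T
    hTne Δ Cg ρ hΔ hCg hρ Good hGood hGrid yhatt hyhatt yhat hmed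
end

section
/- Level-set growth for VC classes under 0–1 loss: Let n ≥ 3, let d ≥ 1, and let ℋ be a finite class of functions from {x_1,…,x_n} to {0,1} whose VC dimension is at most d (no subset of {x_1,…,x_n} of cardinality d+1 is shattered by ℋ). Let μ be the counting measure on ℋ, and let 𝒯 = {1, 2, …, N} with N = ⌈24 d ln n⌉. Then the number of tolerances t ∈ 𝒯 for which μ(ℋ_{t+1}) > 2·μ(ℋ_{t−1}) is at most 6 d ln n; consequently, at least (3/4)·|𝒯| tolerances t ∈ 𝒯 satisfy both μ(ℋ_{t+1}) ≤ 2·μ(ℋ_{t−1}) and ℋ_{t−1} ⊆ ℋ_{t,i} ⊆ ℋ_{t+1} for all i ∈ {1,…,n}. -/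
/-! With `a s = log |ℋ_s|`, the increments `a (t+1) - a (t-1)` for `t = 1, …, N` are nonnegative
and telescope to at most `2 log |ℋ|`, while every tolerance at which the level set more than
doubles contributes more than `log 2`. Sauer–Shelah gives `|ℋ| ≤ n^(2d)`, so there are at most
`4 d ln n / ln 2 ≤ 6 d ln n ≤ N / 4` such tolerances. The sandwich holds at every tolerance, since
deleting one sample changes each empirical risk by at most one. -/

open Finset
open scoped Classical

section Shattering

variable {α : Type*} [Fintype α]

def trueSet (h : α → Bool) : Finset α := {i | h i = true}

lemma trueSet_injective : Function.Injective (trueSet (α := α)) := by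
  intro h h' hE
  funext i
  have := congrArg (i ∈ ·) hE
  exact Bool.eq_iff_iff.2 (by simpa [trueSet] using this)

lemma exists_eqOn_of_shatters {H : Finset (α → Bool)} {T : Finset α}
    (hT : (H.image trueSet).Shatters T) (f : α → Bool) : ∃ h ∈ H, ∀ i ∈ T, h i = f i := by
  obtain ⟨u, hu, huT⟩ := hT (filter_subset (fun i => f i = true) T)
  obtain ⟨h, hH, rfl⟩ := mem_image.1 hu
  refine ⟨h, hH, fun i hi => ?_⟩
  have := congrArg (i ∈ ·) huT
  exact Bool.eq_iff_iff.2 (by simpa [trueSet, hi] using this)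

lemma vcDim_image_trueSet_le {H : Finset (α → Bool)} {d : ℕ}
    (hVC : ∀ T : Finset α, #T = d + 1 → ¬ ∀ f : α → Bool, ∃ h ∈ H, ∀ i ∈ T, h i = f i) :
    (H.image trueSet).vcDim ≤ d := by
  refine Finset.sup_le fun s hs => ?_
  by_contra! hlt
  obtain ⟨T, hTs, hTcard⟩ := exists_subset_card_eq (show d + 1 ≤ #s from hlt)
  exact hVC T hTcard (exists_eqOn_of_shatters ((mem_shatterer.1 hs).mono_right hTs))

lemma card_le_sum_choose_of_vc {H : Finset (α → Bool)} {d : ℕ}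
    (hVC : ∀ T : Finset α, #T = d + 1 → ¬ ∀ f : α → Bool, ∃ h ∈ H, ∀ i ∈ T, h i = f i) :
    #H ≤ ∑ k ∈ Iic d, (Fintype.card α).choose k :=
  calc #H = #(H.image trueSet) := (card_image_of_injective _ trueSet_injective).symm
    _ ≤ #(H.image trueSet).shatterer := card_le_card_shatterer _
    _ ≤ ∑ k ∈ Iic (H.image trueSet).vcDim, (Fintype.card α).choose k :=
      card_shatterer_le_sum_vcDim
    _ ≤ ∑ k ∈ Iic d, (Fintype.card α).choose k :=
      sum_le_sum_of_subset (Iic_subset_Iic.2 (vcDim_image_trueSet_le hVC))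

end Shattering

lemma sum_Iic_choose_le_pow {n : ℕ} (hn : 2 ≤ n) (d : ℕ) :
    ∑ k ∈ Iic d, n.choose k ≤ n ^ (2 * d) :=
  calc ∑ k ∈ Iic d, n.choose k ≤ ∑ _k ∈ Iic d, n ^ d :=
        sum_le_sum fun k hk => (Nat.choose_le_pow n k).trans
          (Nat.pow_le_pow_right (by omega) (mem_Iic.1 hk))
    _ = (d + 1) * n ^ d := by rw [sum_const, Nat.card_Iic, smul_eq_mul]
    _ ≤ 2 ^ d * n ^ d := Nat.mul_le_mul_right _ Nat.lt_two_pow_self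
    _ ≤ n ^ d * n ^ d := Nat.mul_le_mul_right _ (Nat.pow_le_pow_left hn d)
    _ = n ^ (2 * d) := by rw [← pow_add, two_mul]

lemma sum_Icc_add_one_sub_sub_one (a : ℝ → ℝ) (N : ℕ) :
    ∑ t ∈ Icc 1 N, (a (t + 1) - a (t - 1)) = a (N + 1) + a N - a 1 - a 0 := by
  induction N with
  | zero => simp
  | succ N ih =>
    rw [sum_Icc_succ_top (by omega), ih]
    push_cast
    rw [add_sub_cancel_right]
    ring

lemma card_filter_mul_le_sum {ι : Type*} {s : Finset ι} {f : ι → ℝ} (hf : ∀ t ∈ s, 0 ≤ f t)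
    (c : ℝ) : #{t ∈ s | c < f t} * c ≤ ∑ t ∈ s, f t :=
  calc #{t ∈ s | c < f t} * c ≤ ∑ t ∈ s with c < f t, f t := by
        rw [← nsmul_eq_mul]
        exact card_nsmul_le_sum _ _ _ fun t ht => (mem_filter.1 ht).2.le
    _ ≤ ∑ t ∈ s, f t := sum_le_sum_of_subset_of_nonneg (filter_subset _ _)
        fun t ht _ => hf t ht

lemma card_doubling_mul_log_two_le {F : ℝ → ℕ} (hF : Monotone F) (hF0 : 0 < F 0) {M : ℕ}
    (hM : ∀ s, F s ≤ M) (N : ℕ) :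
    #((Icc 1 N).filter fun t : ℕ => 2 * (F (t - 1) : ℝ) < F (t + 1)) * Real.log 2 ≤
      2 * Real.log M := by
  set a : ℝ → ℝ := fun s => Real.log (F s)
  set step : ℕ → ℝ := fun t => a (t + 1) - a (t - 1)
  have hpos : ∀ s : ℝ, 0 ≤ s → (0 : ℝ) < F s := fun s hs => by
    exact_mod_cast hF0.trans_le (hF hs)
  have ha_nonneg : ∀ s : ℝ, 0 ≤ s → 0 ≤ a s := fun s hs =>
    Real.log_nonneg (by exact_mod_cast (hpos s hs : (0 : ℝ) < F s))
  have ha_le : ∀ s : ℝ, 0 ≤ s → a s ≤ Real.log M := fun s hs =>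
    Real.log_le_log (hpos s hs) (by exact_mod_cast hM s)
  have hstep_nonneg : ∀ t ∈ Icc 1 N, 0 ≤ step t := fun t ht => by
    have ht1 : (1 : ℝ) ≤ t := by exact_mod_cast (mem_Icc.1 ht).1
    exact sub_nonneg.2 <| Real.log_le_log (hpos _ (by linarith))
      (Nat.cast_le.2 (hF (by linarith : (t : ℝ) - 1 ≤ t + 1)))
  have hbad : ((Icc 1 N).filter fun t : ℕ => 2 * (F (t - 1) : ℝ) < F (t + 1)) ⊆
      {t ∈ Icc 1 N | Real.log 2 < step t} := by
    refine monotone_filter_right _ fun t ht hlt => ?_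
    have ht1 : (1 : ℝ) ≤ t := by exact_mod_cast (mem_Icc.1 ht).1
    have h := Real.log_lt_log (mul_pos two_pos (hpos _ (by linarith))) hlt
    rw [Real.log_mul two_ne_zero (hpos _ (by linarith)).ne'] at h
    exact lt_sub_iff_add_lt.2 (by simp only [a]; linarith)
  calc _ ≤ (#{t ∈ Icc 1 N | Real.log 2 < step t} : ℝ) * Real.log 2 := by gcongr
    _ ≤ ∑ t ∈ Icc 1 N, step t := card_filter_mul_le_sum hstep_nonneg _
    _ = a (N + 1) + a N - a 1 - a 0 := sum_Icc_add_one_sub_sub_one a N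
    _ ≤ 2 * Real.log M := by
        linarith [ha_le (N + 1) (by positivity), ha_le N (by positivity),
          ha_nonneg 1 zero_le_one, ha_nonneg 0 le_rfl]

lemma card_doubling_le {F : ℝ → ℕ} (hF : Monotone F) (hF0 : 0 < F 0) {n d : ℕ}
    (hM : ∀ s, F s ≤ n ^ (2 * d)) (N : ℕ) :
    (#((Icc 1 N).filter fun t : ℕ => 2 * (F (t - 1) : ℝ) < F (t + 1)) : ℝ) ≤
      6 * d * Real.log n := by
  have h := card_doubling_mul_log_two_le hF hF0 hM N
  rw [Nat.cast_pow, Real.log_pow, Nat.cast_mul, Nat.cast_two] at h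
  nlinarith [Real.log_two_gt_d9, (#((Icc 1 N).filter fun t : ℕ =>
    2 * (F (t - 1) : ℝ) < F (t + 1))).cast_nonneg (α := ℝ)]

lemma sub_le_card_filter_not {p : ℕ → Prop} {N : ℕ} {B : ℝ}
    (hp : (#((Icc 1 N).filter p) : ℝ) ≤ B) : N - B ≤ #((Icc 1 N).filter fun t => ¬ p t) := by
  have hcount := card_filter_add_card_filter_not (s := Icc 1 N) p
  rw [Nat.card_Icc, add_tsub_cancel_right] at hcount
  have := congrArg (Nat.cast : ℕ → ℝ) hcount
  push_cast at this
  linarith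

lemma filter_le_add_subset_filter_le_add {X : Type*} {H : Finset X} {L₁ L₂ : X → ℝ}
    {a b s s' : ℝ} (h₂₁ : ∀ x, L₂ x ≤ L₁ x + a) (h₁₂ : ∀ x, L₁ x ≤ L₂ x + b) {g₁ g₂ : X}
    (hg : L₁ g₁ ≤ L₁ g₂) (hs : s + a + b ≤ s') :
    H.filter (fun h => L₁ h ≤ L₁ g₁ + s) ⊆ H.filter (fun h => L₂ h ≤ L₂ g₂ + s') :=
  monotone_filter_right _ fun x _ hx => by linarith [h₂₁ x, h₁₂ g₂]

theorem vc_levelset_growth_general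
    {n d : ℕ} (hn : 3 ≤ n)
    (y : Fin n → Bool)
    (H : Finset (Fin n → Bool))
    -- VC dimension at most d: no subset of cardinality d+1 is shattered by H
    (hVC : ∀ T : Finset (Fin n), T.card = d + 1 →
      ¬ (∀ f : Fin n → Bool, ∃ h ∈ H, ∀ i ∈ T, h i = f i))
    (ℓ : Bool → Bool → ℝ) (hℓ : ∀ a b, ℓ a b = if a = b then 0 else 1)
    (LS : (Fin n → Bool) → ℝ) (hLS : ∀ h, LS h = ∑ i, ℓ (h i) (y i))
    (LSm : Fin n → (Fin n → Bool) → ℝ)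
    (hLSm : ∀ i h, LSm i h = ∑ j ∈ Finset.univ.erase i, ℓ (h j) (y j))
    (g : Fin n → Bool) (hgH : g ∈ H) (hg : ∀ h ∈ H, LS g ≤ LS h)
    (gm : Fin n → Fin n → Bool) (hgmH : ∀ i, gm i ∈ H)
    (hgm : ∀ i, ∀ h ∈ H, LSm i (gm i) ≤ LSm i h)
    (Ht : ℝ → Finset (Fin n → Bool))
    (hHt : ∀ s, Ht s = H.filter fun h => LS h ≤ LS g + s)
    (Hti : ℝ → Fin n → Finset (Fin n → Bool))
    (hHti : ∀ s i, Hti s i = H.filter fun h => LSm i h ≤ LSm i (gm i) + s)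
    (N : ℕ) (hN : N = ⌈24 * (d : ℝ) * Real.log n⌉₊) :
    ((((Finset.Icc 1 N).filter fun t : ℕ =>
        2 * ((Ht ((t : ℝ) - 1)).card : ℝ) < ((Ht ((t : ℝ) + 1)).card : ℝ)).card : ℝ)
      ≤ 6 * (d : ℝ) * Real.log n) ∧
    ((3 / 4 : ℝ) * N ≤
      (((Finset.Icc 1 N).filter fun t : ℕ =>
        ((Ht ((t : ℝ) + 1)).card : ℝ) ≤ 2 * ((Ht ((t : ℝ) - 1)).card : ℝ) ∧
        ∀ i : Fin n, Ht ((t : ℝ) - 1) ⊆ Hti (t : ℝ) i ∧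
          Hti (t : ℝ) i ⊆ Ht ((t : ℝ) + 1)).card : ℝ)) := by
  have hloss : ∀ i h, LSm i h ≤ LS h ∧ LS h ≤ LSm i h + 1 := fun i h => by
    rw [hLS, hLSm, ← sum_erase_add _ _ (mem_univ i), hℓ]
    constructor <;> split_ifs <;> linarith
  have hsandwich : ∀ (t : ℝ) i, Ht (t - 1) ⊆ Hti t i ∧ Hti t i ⊆ Ht (t + 1) := fun t i => by
    rw [hHt, hHt, hHti]
    exact ⟨filter_le_add_subset_filter_le_add (a := 0) (b := 1) (fun h => by linarith [hloss i h])
        (fun h => (hloss i h).2) (hg _ (hgmH i)) (by linarith),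
      filter_le_add_subset_filter_le_add (a := 1) (b := 0) (fun h => (hloss i h).2)
        (fun h => by linarith [hloss i h]) (hgm i g hgH) (by linarith)⟩
  have hHt_mono : Monotone fun s => #(Ht s) := fun s s' hss' => by
    simp only [hHt]
    exact card_le_card (monotone_filter_right _ fun h _ hh => by linarith)
  have hHt_pos : 0 < #(Ht 0) := card_pos.2 ⟨g, by simp [hHt, hgH]⟩
  have hHt_le : ∀ s, #(Ht s) ≤ n ^ (2 * d) := fun s => by
    calc #(Ht s) ≤ #H := card_le_card (by rw [hHt]; exact filter_subset _ _)
      _ ≤ ∑ k ∈ Iic d, (Fintype.card (Fin n)).choose k := card_le_sum_choose_of_vc hVC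
      _ ≤ n ^ (2 * d) := by rw [Fintype.card_fin]; exact sum_Iic_choose_le_pow (by omega) d
  have hbad := card_doubling_le hHt_mono hHt_pos hHt_le N
  refine ⟨hbad, ?_⟩
  have hN_ge : 24 * d * Real.log n ≤ N := hN ▸ Nat.le_ceil _
  have hgood := sub_le_card_filter_not hbad
  simp only [not_lt] at hgood
  rw [filter_congr fun (t : ℕ) _ => and_iff_left (hsandwich t)]
  linarith

/-- **Level-set growth for VC classes under 0–1 loss.**
`H` is a finite class of binary hypotheses on the `n` sample points (identified with
`Fin n`), of VC dimension at most `d` (no subset of cardinality `d+1` is shattered).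
With the counting measure (`Finset.card`), grid `𝒯 = {1,…,N}`, `N = ⌈24 d ln n⌉`:
the number of bad tolerances (those with `|ℋ_{t+1}| > 2|ℋ_{t−1}|`) is at most
`6 d ln n`, and consequently at least `(3/4)·|𝒯|` tolerances satisfy both the growth
bound and the sandwich `ℋ_{t−1} ⊆ ℋ_{t,i} ⊆ ℋ_{t+1}` for all `i`. -/
theorem vc_levelset_growth
    {n d : ℕ} (hn : 3 ≤ n) (hd : 1 ≤ d)
    (y : Fin n → Bool)
    (H : Finset (Fin n → Bool)) (hHne : H.Nonempty)
    -- VC dimension at most d: no subset of cardinality d+1 is shattered by H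
    (hVC : ∀ T : Finset (Fin n), T.card = d + 1 →
      ¬ (∀ f : Fin n → Bool, ∃ h ∈ H, ∀ i ∈ T, h i = f i))
    (ℓ : Bool → Bool → ℝ) (hℓ : ∀ a b, ℓ a b = if a = b then 0 else 1)
    (LS : (Fin n → Bool) → ℝ) (hLS : ∀ h, LS h = ∑ i, ℓ (h i) (y i))
    (LSm : Fin n → (Fin n → Bool) → ℝ)
    (hLSm : ∀ i h, LSm i h = ∑ j ∈ Finset.univ.erase i, ℓ (h j) (y j))
    (g : Fin n → Bool) (hgH : g ∈ H) (hg : ∀ h ∈ H, LS g ≤ LS h)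
    (gm : Fin n → Fin n → Bool) (hgmH : ∀ i, gm i ∈ H)
    (hgm : ∀ i, ∀ h ∈ H, LSm i (gm i) ≤ LSm i h)
    (Ht : ℝ → Finset (Fin n → Bool))
    (hHt : ∀ s, Ht s = H.filter fun h => LS h ≤ LS g + s)
    (Hti : ℝ → Fin n → Finset (Fin n → Bool))
    (hHti : ∀ s i, Hti s i = H.filter fun h => LSm i h ≤ LSm i (gm i) + s)
    (N : ℕ) (hN : N = ⌈24 * (d : ℝ) * Real.log n⌉₊) :
    ((((Finset.Icc 1 N).filter fun t : ℕ =>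
        2 * ((Ht ((t : ℝ) - 1)).card : ℝ) < ((Ht ((t : ℝ) + 1)).card : ℝ)).card : ℝ)
      ≤ 6 * (d : ℝ) * Real.log n) ∧
    ((3 / 4 : ℝ) * N ≤
      (((Finset.Icc 1 N).filter fun t : ℕ =>
        ((Ht ((t : ℝ) + 1)).card : ℝ) ≤ 2 * ((Ht ((t : ℝ) - 1)).card : ℝ) ∧
        ∀ i : Fin n, Ht ((t : ℝ) - 1) ⊆ Hti (t : ℝ) i ∧
          Hti (t : ℝ) i ⊆ Ht ((t : ℝ) + 1)).card : ℝ)) :=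
  vc_levelset_growth_general hn y H hVC ℓ hℓ LS hLS LSm hLSm g hgH hg gm hgmH hgm Ht hHt Hti hHti N
    hN
end

section
/- LOO oracle inequality for VC classes under 0–1 loss: Let n ≥ 9, d ≥ 1, and let ℋ be a finite class of functions from {x_1,…,x_n} to {0,1} whose VC dimension is at most d. Run Median of Level-Set Aggregation with tolerance grid 𝒯 = {1,…,⌈24 d ln n⌉}: for each i ∈ {1,…,n} and t ∈ 𝒯 set ŷ_{t,i} = 1 if Σ_{h∈ℋ_{t,i}} (2h(x_i) − 1) ≥ 0 and ŷ_{t,i} = 0 otherwise (majority vote over ℋ_{t,i}), and let ŷ_i be any median of {ŷ_{t,i}}_{t∈𝒯}. Then (1/n) Σ_{i=1}^n ℓ(ŷ_i, y_i) ≤ (8/n)·min_{h∈ℋ} L_S(h) + (200/n)·d·ln n. -/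
/-!
Compare the leave-one-out level sets with the global ones `A s = {h ∈ ℋ | L_S h ≤ min L_S + s}`:
`A (t-1) ⊆ ℋ_{t,i}`, and every `h ∈ ℋ_{t,i}` that errs at `x_i` lies in `A (t+1)`. If the vote
at tolerance `t` errs at `x_i`, at least half of `ℋ_{t,i}` errs there, which forces `|A (t-1)|`
to be at most the number of members of `A (t+1)` and of `A (t-1)` erring at `x_i`. Summing over
`i`, tolerance `t` errs at most `(|A (t+1)| / |A (t-1)| + 1) (min L_S + t + 1)` times.
The increments `log |A (t+1)| - log |A (t-1)|` telescope to at most `2 log |ℋ|`, and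
`log |ℋ| ≤ d log (n+1)` by Sauer–Shelah. So at most `2 log |ℋ|` tolerances have
`|A (t+1)| > e |A (t-1)|`, and on the others `r - 1 ≤ (e - 1) log r` bounds the sum of the ratios
by `N + 2 (e - 1) log |ℋ|`. A median errs at `x_i` only if half of the tolerances do, which turns
this into the claim.
-/

open Finset Real
open scoped Classical

theorem Nat.sum_Iic_choose_le_add_one_pow (n d : ℕ) : ∑ k ∈ Iic d, n.choose k ≤ (n + 1) ^ d := by
  induction d with
  | zero => simp [← Nat.range_succ_eq_Iic]
  | succ d ih =>
    rw [← Nat.range_succ_eq_Iic, sum_range_succ, Nat.range_succ_eq_Iic]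
    calc ∑ k ∈ Iic d, n.choose k + n.choose (d + 1) ≤ (n + 1) ^ d + n * (n + 1) ^ d := by
          gcongr
          exact (Nat.choose_le_pow n (d + 1)).trans <| by rw [pow_succ']; gcongr; omega
      _ = (n + 1) ^ (d + 1) := by ring

theorem Finset.card_le_add_one_pow_of_not_shatters {α : Type*} [Fintype α]
    (H : Finset (α → Bool)) {d : ℕ}
    (hVC : ∀ T : Finset α, #T = d + 1 → ¬ ∀ f : α → Bool, ∃ h ∈ H, ∀ i ∈ T, h i = f i) :
    #H ≤ (Fintype.card α + 1) ^ d := by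
  set supp : (α → Bool) → Finset α := fun h => {i | h i = true}
  have hsupp : ∀ h i, i ∈ supp h ↔ h i = true := by simp [supp]
  have hinj : Set.InjOn supp H := fun h₁ _ h₂ _ he =>
    funext fun i => Bool.eq_iff_iff.2 <| by rw [← hsupp, ← hsupp, he]
  have hvc : (H.image supp).vcDim ≤ d := by
    refine Finset.sup_le fun s hs => ?_
    by_contra! hlt
    obtain ⟨T, hTs, hT⟩ := exists_subset_card_eq (show d + 1 ≤ #s by omega)
    refine hVC T hT fun f => ?_
    obtain ⟨u, hu, huT⟩ := ((mem_shatterer.1 hs).mono_right hTs) (filter_subset (f · = true) T)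
    obtain ⟨h, hH, rfl⟩ := mem_image.1 hu
    refine ⟨h, hH, fun i hi => Bool.eq_iff_iff.2 ?_⟩
    simpa [hi, hsupp] using congrArg (i ∈ ·) huT
  calc #H = #(H.image supp) := (card_image_of_injOn hinj).symm
    _ ≤ #(H.image supp).shatterer := card_le_card_shatterer _
    _ ≤ ∑ k ∈ Iic (H.image supp).vcDim, (Fintype.card α).choose k := card_shatterer_le_sum_vcDim
    _ ≤ ∑ k ∈ Iic d, (Fintype.card α).choose k := sum_le_sum_of_subset (Iic_subset_Iic.2 hvc)
    _ ≤ (Fintype.card α + 1) ^ d := Nat.sum_Iic_choose_le_add_one_pow _ _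

theorem Finset.card_le_two_mul_card_filter_of_median {τ : Type*} (T : Finset τ) (a : τ → ℝ)
    {m v : ℝ} (hmed : ∑ t ∈ T, |a t - m| ≤ ∑ t ∈ T, |a t - v|) (hmv : m ≠ v) :
    #T ≤ 2 * #{t ∈ T | a t ≠ v} := by
  set δ := |m - v|
  have hδ : 0 < δ := abs_pos.2 (sub_ne_zero.2 hmv)
  have hterm : ∀ t, |a t - v| - |a t - m| ≤ if a t ≠ v then δ else -δ := by
    intro t
    split_ifs with h
    · linarith [abs_sub_le (a t) m v, abs_sub_comm m v]
    · rw [not_not.1 h, sub_self, abs_zero, abs_sub_comm]; simp [δ]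
  have hsum : 0 ≤ ((#{t ∈ T | a t ≠ v} : ℝ) - #{t ∈ T | ¬ a t ≠ v}) * δ := by
    calc (0 : ℝ) ≤ ∑ t ∈ T, (|a t - v| - |a t - m|) := by rw [sum_sub_distrib]; linarith
      _ ≤ ∑ t ∈ T, (if a t ≠ v then δ else -δ) := sum_le_sum fun t _ => hterm t
      _ = _ := by rw [sum_ite]; simp; ring
  have hle : #{t ∈ T | ¬ a t ≠ v} ≤ #{t ∈ T | a t ≠ v} := by
    exact_mod_cast (by nlinarith : (#{t ∈ T | ¬ a t ≠ v} : ℝ) ≤ #{t ∈ T | a t ≠ v})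
  have := card_filter_add_card_filter_not (s := T) (fun t => a t ≠ v)
  omega

theorem Finset.card_le_card_filter_add_card_filter_of_majority {β : Type*} {A S B : Finset β}
    (p : β → Prop) [DecidablePred p] (hAS : A ⊆ S) (hSB : S.filter p ⊆ B)
    (hS : #S ≤ 2 * #(S.filter p)) :
    #A ≤ #(B.filter p) + #(A.filter p) := by
  have hA := card_filter_add_card_filter_not (s := A) p
  have hS' := card_filter_add_card_filter_not (s := S) p
  have hnot : #{h ∈ A | ¬ p h} ≤ #{h ∈ S | ¬ p h} := card_le_card (filter_subset_filter _ hAS)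
  have hB : #(S.filter p) ≤ #(B.filter p) :=
    card_le_card fun h hh => mem_filter.2 ⟨hSB hh, (mem_filter.1 hh).2⟩
  omega

theorem Finset.card_mul_card_le_of_forall_card_le_two_mul {ι τ : Type*} (I : Finset ι)
    (T G : Finset τ) (bad : τ → ι → Prop) [∀ t i, Decidable (bad t i)]
    (hmaj : ∀ i ∈ I, #T ≤ 2 * #{t ∈ T | bad t i}) :
    #I * #T ≤ 2 * ∑ t ∈ G, #{i ∈ I | bad t i} + 2 * (#I * #(T \ G)) := by
  have hsplit : ∀ i, #{t ∈ T | bad t i} ≤ #{t ∈ G | bad t i} + #(T \ G) := fun i =>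
    (card_le_card fun t ht => by
      by_cases htG : t ∈ G <;> simp_all [mem_union, mem_filter, mem_sdiff]).trans
      (card_union_le _ _)
  calc #I * #T = ∑ i ∈ I, #T := by rw [sum_const, smul_eq_mul]
    _ ≤ ∑ i ∈ I, 2 * (#{t ∈ G | bad t i} + #(T \ G)) :=
        sum_le_sum fun i hi => (hmaj i hi).trans (Nat.mul_le_mul_left 2 (hsplit i))
    _ = 2 * ∑ t ∈ G, #{i ∈ I | bad t i} + 2 * (#I * #(T \ G)) := by
        rw [← mul_sum, sum_add_distrib, sum_const, smul_eq_mul, mul_add]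
        congr 2
        exact sum_card_bipartiteAbove_eq_sum_card_bipartiteBelow (fun i t => bad t i)

theorem sub_one_le_exp_one_sub_one_mul_log {x : ℝ} (h1 : 1 ≤ x) (he : x ≤ exp 1) :
    x - 1 ≤ (exp 1 - 1) * log x := by
  have hu0 : 0 ≤ log x := log_nonneg h1
  have hu1 : log x ≤ 1 := by simpa using log_le_log (by linarith) he
  -- `x = exp (log x)` lies below the chord of `exp` over `[0, 1]`
  have hchord := convexOn_exp.2 (Set.mem_univ 0) (Set.mem_univ 1) (sub_nonneg.2 hu1) hu0
    (sub_add_cancel 1 (log x))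
  simp only [smul_eq_mul, mul_zero, mul_one, zero_add, exp_zero, exp_log (by linarith : 0 < x)]
    at hchord
  linarith

theorem sum_Icc_succ_sub_pred (f : ℕ → ℝ) (N : ℕ) :
    ∑ t ∈ Icc 1 N, (f (t + 1) - f (t - 1)) = f (N + 1) + f N - f 1 - f 0 := by
  induction N with
  | zero => simp
  | succ N ih => rw [sum_Icc_succ_top (by omega), ih, Nat.add_sub_cancel]; ring

section Growth

variable {a : ℕ → ℝ} {K : ℝ}

theorem sum_Icc_log_succ_sub_log_pred_le (ha : Monotone a) (ha0 : 1 ≤ a 0) (haK : ∀ s, a s ≤ K)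
    (N : ℕ) : ∑ t ∈ Icc 1 N, (log (a (t + 1)) - log (a (t - 1))) ≤ 2 * log K := by
  have hlog : ∀ s, 0 ≤ log (a s) ∧ log (a s) ≤ log K := fun s =>
    have h1 : 1 ≤ a s := ha0.trans (ha (Nat.zero_le s))
    ⟨log_nonneg h1, log_le_log (by linarith) (haK s)⟩
  rw [sum_Icc_succ_sub_pred (fun s => log (a s))]
  linarith [hlog (N + 1), hlog N, hlog 1, hlog 0]

theorem log_succ_sub_log_pred_nonneg (ha : Monotone a) (ha0 : 1 ≤ a 0) (t : ℕ) :
    0 ≤ log (a (t + 1)) - log (a (t - 1)) :=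
  sub_nonneg.2 <| log_le_log (by linarith [ha (Nat.zero_le (t - 1))]) (ha (by omega))

theorem card_filter_exp_one_mul_lt_le (ha : Monotone a) (ha0 : 1 ≤ a 0) (haK : ∀ s, a s ≤ K)
    (N : ℕ) : (#{t ∈ Icc 1 N | exp 1 * a (t - 1) < a (t + 1)} : ℝ) ≤ 2 * log K := by
  calc (#{t ∈ Icc 1 N | exp 1 * a (t - 1) < a (t + 1)} : ℝ)
      = ∑ t ∈ Icc 1 N with exp 1 * a (t - 1) < a (t + 1), (1 : ℝ) := by simp
    _ ≤ ∑ t ∈ Icc 1 N with exp 1 * a (t - 1) < a (t + 1), (log (a (t + 1)) - log (a (t - 1))) :=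
        sum_le_sum fun t ht => by
          have hpos : 0 < a (t - 1) := by linarith [ha (Nat.zero_le (t - 1))]
          have := log_le_log (by positivity) (mem_filter.1 ht).2.le
          rw [log_mul (exp_ne_zero 1) hpos.ne', log_exp] at this
          linarith
    _ ≤ ∑ t ∈ Icc 1 N, (log (a (t + 1)) - log (a (t - 1))) :=
        sum_le_sum_of_subset_of_nonneg (filter_subset _ _)
          fun t _ _ => log_succ_sub_log_pred_nonneg ha ha0 t
    _ ≤ 2 * log K := sum_Icc_log_succ_sub_log_pred_le ha ha0 haK N

theorem sum_filter_div_le_exp_one_le (ha : Monotone a) (ha0 : 1 ≤ a 0) (haK : ∀ s, a s ≤ K)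
    (N : ℕ) : ∑ t ∈ Icc 1 N with a (t + 1) ≤ exp 1 * a (t - 1), a (t + 1) / a (t - 1)
      ≤ N + 2 * (exp 1 - 1) * log K := by
  calc ∑ t ∈ Icc 1 N with a (t + 1) ≤ exp 1 * a (t - 1), a (t + 1) / a (t - 1)
      ≤ ∑ t ∈ Icc 1 N with a (t + 1) ≤ exp 1 * a (t - 1),
          (1 + (exp 1 - 1) * (log (a (t + 1)) - log (a (t - 1)))) :=
        sum_le_sum fun t ht => by
          have hpos : 0 < a (t - 1) := by linarith [ha (Nat.zero_le (t - 1))]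
          have h1 : 1 ≤ a (t + 1) / a (t - 1) := (one_le_div hpos).2 (ha (by omega))
          have he : a (t + 1) / a (t - 1) ≤ exp 1 := (div_le_iff₀ hpos).2 (mem_filter.1 ht).2
          have := sub_one_le_exp_one_sub_one_mul_log h1 he
          rw [log_div (hpos.trans_le (ha (by omega))).ne' hpos.ne'] at this
          linarith
    _ ≤ ∑ t ∈ Icc 1 N, (1 + (exp 1 - 1) * (log (a (t + 1)) - log (a (t - 1)))) :=
        sum_le_sum_of_subset_of_nonneg (filter_subset _ _) fun t _ _ =>
          add_nonneg zero_le_one <| mul_nonneg (by linarith [add_one_le_exp 1])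
            (log_succ_sub_log_pred_nonneg ha ha0 t)
    _ ≤ N + 2 * (exp 1 - 1) * log K := by
        rw [sum_add_distrib, ← mul_sum, sum_const, Nat.card_Icc, Nat.add_sub_cancel, nsmul_one]
        nlinarith [sum_Icc_log_succ_sub_log_pred_le ha ha0 haK N, add_one_le_exp 1]

end Growth

section MajorityVote

variable {α : Type*}

def majorityVote (S : Finset (α → Bool)) (i : α) : Bool :=
  #{h ∈ S | h i = false} ≤ #{h ∈ S | h i = true}

theorem sum_two_mul_sub_one_nonneg_iff (S : Finset (α → Bool)) (i : α) :
    0 ≤ ∑ h ∈ S, (2 * (if h i then 1 else 0) - 1 : ℝ) ↔ majorityVote S i = true := by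
  have hcard := card_filter_add_card_filter_not (s := S) (fun h => h i = true)
  simp only [Bool.not_eq_true] at hcard
  rw [sum_sub_distrib, ← mul_sum, sum_boole, sum_const, nsmul_one, ← hcard, majorityVote,
    decide_eq_true_eq, ← Nat.cast_le (α := ℝ)]
  push_cast
  constructor <;> intro h <;> linarith

theorem card_le_two_mul_card_filter_of_majorityVote_ne {S : Finset (α → Bool)} {i : α}
    {b : Bool} (hb : majorityVote S i ≠ b) : #S ≤ 2 * #{h ∈ S | h i ≠ b} := by
  have := card_filter_add_card_filter_not (s := S) (fun h => h i = true)
  cases b <;> simp_all [majorityVote] <;> omega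

theorem card_le_two_mul_card_majorityVote_ne_of_median (S : ℕ → Finset (α → Bool)) (i : α)
    {N : ℕ} {m : ℝ} {b : Bool}
    (hmed : ∀ c, ∑ t ∈ Icc 1 N, |(if majorityVote (S t) i then 1 else 0) - m|
      ≤ ∑ t ∈ Icc 1 N, |(if majorityVote (S t) i then 1 else 0) - c|)
    (hm : m ≠ if b then 1 else 0) :
    N ≤ 2 * #{t ∈ Icc 1 N | majorityVote (S t) i ≠ b} := by
  have hvote : {t ∈ Icc 1 N | (if majorityVote (S t) i then 1 else 0 : ℝ) ≠ if b then 1 else 0}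
      = {t ∈ Icc 1 N | majorityVote (S t) i ≠ b} :=
    filter_congr fun t _ => by cases majorityVote (S t) i <;> cases b <;> norm_num
  have := card_le_two_mul_card_filter_of_median _ _ (hmed _) hm
  rwa [hvote, Nat.card_Icc, Nat.add_sub_cancel] at this

theorem sum_card_filter_ne_eq_sum_hammingDist [Fintype α] (y : α → Bool)
    (B : Finset (α → Bool)) : ∑ i, #{h ∈ B | h i ≠ y i} = ∑ h ∈ B, hammingDist h y :=
  sum_card_bipartiteAbove_eq_sum_card_bipartiteBelow (fun i (h : α → Bool) => h i ≠ y i)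

theorem card_majorityVote_ne_mul_card_le [Fintype α] (y : α → Bool) (S : α → Finset (α → Bool))
    {A B : Finset (α → Bool)} (hAS : ∀ i, A ⊆ S i) (hSB : ∀ i, {h ∈ S i | h i ≠ y i} ⊆ B) :
    #{i | majorityVote (S i) i ≠ y i} * #A
      ≤ ∑ h ∈ B, hammingDist h y + ∑ h ∈ A, hammingDist h y := by
  calc #{i | majorityVote (S i) i ≠ y i} * #A
        = ∑ i ∈ {i | majorityVote (S i) i ≠ y i}, #A := by rw [sum_const, smul_eq_mul]
    _ ≤ ∑ i ∈ {i | majorityVote (S i) i ≠ y i}, (#{h ∈ B | h i ≠ y i} + #{h ∈ A | h i ≠ y i}) :=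
        sum_le_sum fun i hi =>
          card_le_card_filter_add_card_filter_of_majority (fun h => h i ≠ y i) (hAS i) (hSB i)
            (card_le_two_mul_card_filter_of_majorityVote_ne (mem_filter.1 hi).2)
    _ ≤ ∑ i, (#{h ∈ B | h i ≠ y i} + #{h ∈ A | h i ≠ y i}) :=
        sum_le_sum_of_subset (filter_subset _ _)
    _ = _ := by
        rw [sum_add_distrib, sum_card_filter_ne_eq_sum_hammingDist,
          sum_card_filter_ne_eq_sum_hammingDist]

end MajorityVote

section LevelSet

variable {β : Type*} (H : Finset β) (L : β → ℝ) (g : β)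

noncomputable def levelSet (s : ℝ) : Finset β := {h ∈ H | L h ≤ L g + s}

variable {H L g}

theorem levelSet_subset (s : ℝ) : levelSet H L g s ⊆ H := filter_subset _ _

theorem levelSet_mono : Monotone (levelSet H L g) := fun _ _ hst _ hh => by
  simp only [levelSet, mem_filter] at hh ⊢
  exact ⟨hh.1, by linarith⟩

theorem mem_levelSet_self (hg : g ∈ H) {s : ℝ} (hs : 0 ≤ s) : g ∈ levelSet H L g s :=
  mem_filter.2 ⟨hg, by linarith⟩

theorem sum_levelSet_le (s : ℝ) :
    ∑ h ∈ levelSet H L g s, L h ≤ #(levelSet H L g s) * (L g + s) := by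
  have := sum_le_card_nsmul (levelSet H L g s) L (L g + s) fun h hh => (mem_filter.1 hh).2
  rwa [nsmul_eq_mul] at this

variable (H L g) in
theorem monotone_card_levelSet : Monotone fun s : ℕ => (#(levelSet H L g s) : ℝ) :=
  fun _ _ hst => Nat.cast_le.2 <| card_le_card <| levelSet_mono <| Nat.cast_le.2 hst

theorem one_le_card_levelSet_zero (hg : g ∈ H) : 1 ≤ (#(levelSet H L g (0 : ℕ)) : ℝ) :=
  Nat.one_le_cast.2 <| card_pos.2 ⟨g, mem_levelSet_self hg (Nat.cast_nonneg 0)⟩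

theorem card_levelSet_le (s : ℝ) : (#(levelSet H L g s) : ℝ) ≤ #H :=
  Nat.cast_le.2 (card_le_card (levelSet_subset s))

variable {Li : β → ℝ} {gi : β} {w : β → Prop} [DecidablePred w]

theorem levelSet_sub_one_subset_levelSet
    (hsplit : ∀ h, L h = Li h + if w h then 1 else 0) (hg : IsMinOn L H g) (hgi : gi ∈ H)
    (t : ℝ) : levelSet H L g (t - 1) ⊆ levelSet H Li gi t := fun h hh => by
  simp only [levelSet, mem_filter] at hh ⊢
  have := isMinOn_iff.1 hg gi hgi
  have := hsplit h; have := hsplit gi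
  refine ⟨hh.1, ?_⟩
  split_ifs at * <;> linarith

theorem filter_levelSet_subset_levelSet_add_one
    (hsplit : ∀ h, L h = Li h + if w h then 1 else 0) (hgi : IsMinOn Li H gi) (hg : g ∈ H)
    (t : ℝ) : {h ∈ levelSet H Li gi t | w h} ⊆ levelSet H L g (t + 1) := fun h hh => by
  simp only [levelSet, mem_filter] at hh ⊢
  have := isMinOn_iff.1 hgi g hg
  have := hsplit h; have := hsplit g
  refine ⟨hh.1.1, ?_⟩
  split_ifs at * <;> linarith

end LevelSet

section Aggregation

variable {α : Type*} [Fintype α] {y : α → Bool} {L : (α → Bool) → ℝ} {H : Finset (α → Bool)}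
  {g : α → Bool}

theorem card_majorityVote_ne_mul_card_levelSet_le (hL : ∀ h, L h = hammingDist h y)
    (S : α → Finset (α → Bool)) (s : ℝ) (hAS : ∀ i, levelSet H L g (s - 1) ⊆ S i)
    (hSB : ∀ i, {h ∈ S i | h i ≠ y i} ⊆ levelSet H L g (s + 1)) :
    (#{i | majorityVote (S i) i ≠ y i} : ℝ) * #(levelSet H L g (s - 1))
      ≤ (#(levelSet H L g (s + 1)) + #(levelSet H L g (s - 1))) * (L g + s + 1) := by
  have hcount := card_majorityVote_ne_mul_card_le y S hAS hSB
  have hB := sum_levelSet_le (H := H) (L := L) (g := g) (s + 1)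
  have hA := sum_levelSet_le (H := H) (L := L) (g := g) (s - 1)
  simp only [hL] at hA hB
  have hA0 : (0 : ℝ) ≤ #(levelSet H L g (s - 1)) := Nat.cast_nonneg _
  calc (#{i | majorityVote (S i) i ≠ y i} : ℝ) * #(levelSet H L g (s - 1))
      ≤ ∑ h ∈ levelSet H L g (s + 1), (hammingDist h y : ℝ)
        + ∑ h ∈ levelSet H L g (s - 1), (hammingDist h y : ℝ) := by exact_mod_cast hcount
    _ ≤ _ := by rw [hL g]; nlinarith

theorem sum_card_majorityVote_ne_le (hL : ∀ h, L h = hammingDist h y) (hg : g ∈ H)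
    (S : ℕ → α → Finset (α → Bool)) (hAS : ∀ (t : ℕ) i, levelSet H L g (t - 1) ⊆ S t i)
    (hSB : ∀ (t : ℕ) i, {h ∈ S t i | h i ≠ y i} ⊆ levelSet H L g (t + 1)) (N : ℕ) :
    ∑ t ∈ Icc 1 N with
        (#(levelSet H L g ((t + 1 : ℕ) : ℝ)) : ℝ) ≤ exp 1 * #(levelSet H L g ((t - 1 : ℕ) : ℝ)),
      (#{i | majorityVote (S t i) i ≠ y i} : ℝ)
      ≤ (2 * N + 2 * (exp 1 - 1) * log #H) * (L g + N + 1) := by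
  set a : ℕ → ℝ := fun s => #(levelSet H L g s)
  have ha := monotone_card_levelSet H L g
  have ha0 := one_le_card_levelSet_zero (L := L) hg
  set C := L g + N + 1
  have hterm : ∀ t ∈ Icc 1 N, (#{i | majorityVote (S t i) i ≠ y i} : ℝ) * a (t - 1)
      ≤ (a (t + 1) + a (t - 1)) * C := by
    intro t ht
    obtain ⟨ht1, htN⟩ := mem_Icc.1 ht
    have key := card_majorityVote_ne_mul_card_levelSet_le hL (S t) t (hAS t) (hSB t)
    rw [← Nat.cast_pred ht1, ← Nat.cast_succ] at key
    refine key.trans (mul_le_mul_of_nonneg_left ?_ (by positivity))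
    simp only [C]
    gcongr
  have hcard : (#{t ∈ Icc 1 N | a (t + 1) ≤ exp 1 * a (t - 1)} : ℝ) ≤ N := by
    exact_mod_cast (card_le_card (filter_subset _ _)).trans (by simp)
  calc ∑ t ∈ Icc 1 N with a (t + 1) ≤ exp 1 * a (t - 1), (#{i | majorityVote (S t i) i ≠ y i} : ℝ)
      ≤ ∑ t ∈ Icc 1 N with a (t + 1) ≤ exp 1 * a (t - 1), (a (t + 1) / a (t - 1) + 1) * C :=
        sum_le_sum fun t ht => by
          have hpos : 0 < a (t - 1) := by linarith [ha (Nat.zero_le (t - 1))]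
          rw [div_add_one hpos.ne', div_mul_eq_mul_div, le_div_iff₀ hpos]
          nlinarith [hterm t (mem_filter.1 ht).1]
    _ = (∑ t ∈ Icc 1 N with a (t + 1) ≤ exp 1 * a (t - 1), a (t + 1) / a (t - 1)
          + #{t ∈ Icc 1 N | a (t + 1) ≤ exp 1 * a (t - 1)}) * C := by
        rw [← sum_mul, sum_add_distrib, sum_const, nsmul_one]
    _ ≤ (N + 2 * (exp 1 - 1) * log #H + N) * C := by
        have hC : 0 ≤ C := by simp only [C, hL g]; positivity
        gcongr
        exact sum_filter_div_le_exp_one_le ha ha0 (fun s => card_levelSet_le s) N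
    _ = (2 * N + 2 * (exp 1 - 1) * log #H) * C := by ring

theorem card_mul_le_of_levelSet_sandwich (hL : ∀ h, L h = hammingDist h y) (hg : g ∈ H)
    (S : ℕ → α → Finset (α → Bool)) (hAS : ∀ (t : ℕ) i, levelSet H L g (t - 1) ⊆ S t i)
    (hSB : ∀ (t : ℕ) i, {h ∈ S t i | h i ≠ y i} ⊆ levelSet H L g (t + 1)) (N : ℕ)
    (I : Finset α) (hI : ∀ i ∈ I, N ≤ 2 * #{t ∈ Icc 1 N | majorityVote (S t i) i ≠ y i}) :
    (#I : ℝ) * (N - 4 * log #H) ≤ 2 * (2 * N + 2 * (exp 1 - 1) * log #H) * (L g + N + 1) := by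
  set a : ℕ → ℝ := fun s => #(levelSet H L g s)
  set good := {t ∈ Icc 1 N | a (t + 1) ≤ exp 1 * a (t - 1)}
  have hcount := card_mul_card_le_of_forall_card_le_two_mul I (Icc 1 N) good
    (fun t i => majorityVote (S t i) i ≠ y i) (by simpa using hI)
  rw [← filter_not] at hcount
  simp only [not_le, Nat.card_Icc, Nat.add_sub_cancel] at hcount
  have hgood : ∑ t ∈ good, #{i ∈ I | majorityVote (S t i) i ≠ y i}
      ≤ ∑ t ∈ good, #{i | majorityVote (S t i) i ≠ y i} :=
    sum_le_sum fun t _ => card_le_card (filter_subset_filter _ (subset_univ I))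
  have hcountR : (#I : ℝ) * N ≤ 2 * ∑ t ∈ good, (#{i | majorityVote (S t i) i ≠ y i} : ℝ)
      + 2 * (#I * #{t ∈ Icc 1 N | exp 1 * a (t - 1) < a (t + 1)}) := by
    exact_mod_cast hcount.trans (by gcongr)
  have hbad := card_filter_exp_one_mul_lt_le (monotone_card_levelSet H L g)
    (one_le_card_levelSet_zero hg) (fun s => card_levelSet_le s) N
  nlinarith [sum_card_majorityVote_ne_le hL hg S hAS hSB N, (Nat.cast_nonneg #I : (0 : ℝ) ≤ #I)]

end Aggregation

theorem ite_ite_eq_ite_ne (a b : Bool) :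
    (if (if a then 1 else 0 : ℝ) = if b then 1 else 0 then 0 else 1 : ℝ)
      = if a ≠ b then 1 else 0 := by
  cases a <;> cases b <;> norm_num

theorem two_le_log_of_nine_le {x : ℝ} (hx : 9 ≤ x) : 2 ≤ log x := by
  rw [le_log_iff_exp_le (by linarith), show (2 : ℝ) = 1 + 1 by norm_num, exp_add]
  nlinarith [exp_one_lt_d9, exp_pos 1]

theorem log_add_one_le_log_add_inv {x : ℝ} (hx : 0 < x) : log (x + 1) ≤ log x + x⁻¹ := by
  have := log_le_sub_one_of_pos (show 0 < (x + 1) / x by positivity)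
  rw [log_div (by linarith) hx.ne', add_div, div_self hx.ne', one_div] at this
  linarith

theorem le_of_mul_ceil_sub_le {n d : ℕ} (hn : 9 ≤ n) (hd : 1 ≤ d) {S L K : ℝ} (hS : 0 ≤ S)
    (hL : 0 ≤ L) (hK : K ≤ d * log (n + 1))
    (h : S * (⌈24 * d * log n⌉₊ - 4 * K)
      ≤ 2 * (2 * ⌈24 * d * log n⌉₊ + 2 * (exp 1 - 1) * K) * (L + ⌈24 * d * log n⌉₊ + 1)) :
    S ≤ 8 * L + 200 * d * log n := by
  set M := (d : ℝ) * log n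
  have hn9 : (9 : ℝ) ≤ n := by exact_mod_cast hn
  have hd1 : (1 : ℝ) ≤ d := by exact_mod_cast hd
  have hlog := two_le_log_of_nine_le hn9
  have hM : 2 ≤ M := by nlinarith
  have hKM : K ≤ 19 / 18 * M := by
    have h1 := log_add_one_le_log_add_inv (show (0 : ℝ) < n by linarith)
    have h2 : (n : ℝ)⁻¹ ≤ 1 / 9 := by rw [inv_eq_one_div]; gcongr
    nlinarith
  set N : ℝ := (⌈24 * (d : ℝ) * log n⌉₊ : ℝ)
  have hN : 24 * M ≤ N ∧ N ≤ 24 * M + 1 := by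
    have h0 : 0 ≤ 24 * (d : ℝ) * log n := by positivity
    have h1 := Nat.le_ceil (24 * (d : ℝ) * log n)
    have h2 := Nat.ceil_lt_add_one h0
    constructor <;> linarith
  have he : exp 1 - 1 ≤ 1.72 := by linarith [exp_one_lt_d9]
  have he0 : 0 ≤ exp 1 - 1 := by linarith [add_one_le_exp 1]
  have hlow : 178 / 9 * M ≤ N - 4 * K := by linarith
  have hhigh : 2 * (2 * N + 2 * (exp 1 - 1) * K) * (L + N + 1) ≤ 106 * M * (L + 25 * M) := by
    have h1 : 2 * N + 2 * (exp 1 - 1) * K ≤ 53 * M := by nlinarith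
    have h2 : L + N + 1 ≤ L + 25 * M := by linarith
    have h3 : 0 ≤ L + N + 1 := by linarith
    nlinarith
  have : 178 / 9 * M * S ≤ 106 * M * (L + 25 * M) := by nlinarith
  nlinarith

/-- **LOO oracle inequality for VC classes under 0–1 loss.**
`H` is a finite class of binary hypotheses on the `n ≥ 9` sample points (identified with
`Fin n`), of VC dimension at most `d`.  Median of Level-Set Aggregation is run with the
tolerance grid `𝒯 = {1,…,⌈24 d ln n⌉}`: `yhatt t i` is the majority vote over the
leave-one-out level set `ℋ_{t,i}` at the point `i` (predictions viewed as reals via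
`b2r`), and `yhat i` is any median of `{yhatt t i}_{t∈𝒯}`.  Then
`(1/n) ∑ i ℓ(yhat i, y i) ≤ (8/n)·min_{h∈H} LS(h) + (200/n)·d·ln n`. -/
theorem vc_loo_oracle
    {n d : ℕ} (hn : 9 ≤ n) (hd : 1 ≤ d)
    (y : Fin n → Bool)
    (H : Finset (Fin n → Bool)) (hHne : H.Nonempty)
    -- VC dimension at most d: no subset of cardinality d+1 is shattered by H
    (hVC : ∀ T : Finset (Fin n), T.card = d + 1 →
      ¬ (∀ f : Fin n → Bool, ∃ h ∈ H, ∀ i ∈ T, h i = f i))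
    (b2r : Bool → ℝ) (hb2r : ∀ b, b2r b = if b then 1 else 0)
    (ℓ : ℝ → ℝ → ℝ) (hℓ : ∀ a b, ℓ a b = if a = b then 0 else 1)
    (LS : (Fin n → Bool) → ℝ) (hLS : ∀ h, LS h = ∑ i, ℓ (b2r (h i)) (b2r (y i)))
    (LSm : Fin n → (Fin n → Bool) → ℝ)
    (hLSm : ∀ i h, LSm i h = ∑ j ∈ Finset.univ.erase i, ℓ (b2r (h j)) (b2r (y j)))
    (g : Fin n → Bool) (hgH : g ∈ H) (hg : ∀ h ∈ H, LS g ≤ LS h)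
    (gm : Fin n → Fin n → Bool) (hgmH : ∀ i, gm i ∈ H)
    (hgm : ∀ i, ∀ h ∈ H, LSm i (gm i) ≤ LSm i h)
    (Hti : ℝ → Fin n → Finset (Fin n → Bool))
    (hHti : ∀ s i, Hti s i = H.filter fun h => LSm i h ≤ LSm i (gm i) + s)
    (N : ℕ) (hN : N = ⌈24 * (d : ℝ) * Real.log n⌉₊)
    -- majority vote over the leave-one-out level set
    (yhatt : ℕ → Fin n → ℝ)
    (hyhatt : ∀ (t : ℕ) (i : Fin n), yhatt t i =
      if 0 ≤ ∑ h ∈ Hti (t : ℝ) i, (2 * b2r (h i) - 1) then 1 else 0)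
    -- yhat i is a median of {yhatt t i}_{t ∈ 𝒯}
    (yhat : Fin n → ℝ)
    (hmed : ∀ i : Fin n, ∀ c : ℝ,
      ∑ t ∈ Finset.Icc 1 N, |yhatt t i - yhat i| ≤ ∑ t ∈ Finset.Icc 1 N, |yhatt t i - c|) :
    (1 / (n : ℝ)) * ∑ i, ℓ (yhat i) (b2r (y i))
      ≤ (8 / (n : ℝ)) * LS g + (200 / (n : ℝ)) * (d : ℝ) * Real.log n := by
  obtain rfl : Hti = fun s i => levelSet H (LSm i) (gm i) s := funext fun s => funext (hHti s)
  simp only [hb2r, hℓ, ite_ite_eq_ite_ne] at hLS hLSm hyhatt ⊢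
  simp only [hyhatt, sum_two_mul_sub_one_nonneg_iff] at hmed
  have hLdist : ∀ h, LS h = hammingDist h y := fun h => by
    simp only [hLS, hammingDist, natCast_card_filter]
  have hsplit : ∀ i h, LS h = LSm i h + if h i ≠ y i then 1 else 0 := fun i h => by
    rw [hLS, hLSm, ← sum_erase_add _ _ (mem_univ i)]
  have hcore := card_mul_le_of_levelSet_sandwich hLdist hgH
    (fun t i => levelSet H (LSm i) (gm i) t)
    (fun t i => levelSet_sub_one_subset_levelSet (hsplit i) (isMinOn_iff.2 hg) (hgmH i) t)
    (fun t i => filter_levelSet_subset_levelSet_add_one (hsplit i) (isMinOn_iff.2 (hgm i)) hgH t)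
    N {i | yhat i ≠ if y i then 1 else 0}
    fun i hi => card_le_two_mul_card_majorityVote_ne_of_median _ i (hmed i) (mem_filter.1 hi).2
  have hsauer : log #H ≤ d * log (n + 1) := by
    rw [← log_pow]
    refine log_le_log (by exact_mod_cast hHne.card_pos) ?_
    exact_mod_cast (card_le_add_one_pow_of_not_shatters H hVC).trans_eq (by rw [Fintype.card_fin])
  have hbound := le_of_mul_ceil_sub_le hn hd (Nat.cast_nonneg _) (by rw [hLdist]; positivity)
    hsauer (hN ▸ hcore)
  rw [natCast_card_filter] at hbound
  simp only [ne_eq, ite_not] at hbound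
  calc _ ≤ 1 / (n : ℝ) * (8 * LS g + 200 * d * log n) := by gcongr
    _ = _ := by ring
end

section
/- Level-set growth for density classes under log loss: Let 𝒫 be a finite class of probability densities with |𝒫| ≥ 2 such that |log(p(x)/q(x))| ≤ M for all p, q ∈ 𝒫 and all x ∈ 𝒳. Let μ be the counting measure on 𝒫 and let 𝒯 = {M, 2M, …, N·M} with N = ⌈12 ln|𝒫|⌉. Then the number of tolerances t ∈ 𝒯 for which μ(𝒫_{t+M}) > 2·μ(𝒫_{t−M}) is at most 3 ln|𝒫|; consequently, at least (3/4)·|𝒯| tolerances t ∈ 𝒯 satisfy both μ(𝒫_{t+M}) ≤ 2·μ(𝒫_{t−M}) and 𝒫_{t−M} ⊆ 𝒫_{t,i} ⊆ 𝒫_{t+M} for all i ∈ {1,…,n}. -/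
open MeasureTheory Finset
open scoped Classical

/-!
Write `u j` for the number of densities within `j * M` of the empirical risk minimiser.
Then `u` is monotone with `1 ≤ u j ≤ |P|`, and a bad tolerance `k * M` is an index where
`u` more than doubles from `k - 1` to `k + 1`. The increments `log u (k + 1) - log u (k - 1)`
are nonnegative and telescope to at most `2 log |P|`, while each bad index contributes more
than `log 2 > 2 / 3`; so there are at most `3 log |P| ≤ N / 4` bad indices. The sandwich
`𝒫_{t-M} ⊆ 𝒫_{t,i} ⊆ 𝒫_{t+M}` holds for every `t`, because dropping the `i`-th sample changes
the risks of any two densities by amounts that differ by at most `M`.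
-/

theorem sum_Icc_sub_pred_eq {G : Type*} [AddCommGroup G] (φ : ℕ → G) (N : ℕ) :
    ∑ k ∈ Icc 1 N, (φ (k + 1) - φ (k - 1)) = φ (N + 1) + φ N - φ 1 - φ 0 := by
  induction N with
  | zero => simp
  | succ N ih =>
    rw [sum_Icc_succ_top (by omega), ih, Nat.add_sub_cancel]
    abel

theorem card_filter_doubling_mul_log_two_le {u : ℕ → ℝ} (hu : Monotone u) (hu₀ : 0 < u 0)
    {C : ℝ} (hC : ∀ j, u j ≤ C) (N : ℕ) :
    #{k ∈ Icc 1 N | 2 * u (k - 1) < u (k + 1)} * Real.log 2 ≤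
      2 * (Real.log C - Real.log (u 0)) := by
  have hpos : ∀ j, 0 < u j := fun j => hu₀.trans_le (hu (Nat.zero_le j))
  have hlog_mono : Monotone fun j => Real.log (u j) := fun i j hij =>
    Real.log_le_log (hpos i) (hu hij)
  calc #{k ∈ Icc 1 N | 2 * u (k - 1) < u (k + 1)} * Real.log 2
      = ∑ k ∈ Icc 1 N with 2 * u (k - 1) < u (k + 1), Real.log 2 := by
        rw [sum_const, nsmul_eq_mul]
    _ ≤ ∑ k ∈ Icc 1 N with 2 * u (k - 1) < u (k + 1),
          (Real.log (u (k + 1)) - Real.log (u (k - 1))) := by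
        refine sum_le_sum fun k hk => ?_
        have hdouble := (mem_filter.mp hk).2
        rw [le_sub_iff_add_le, ← Real.log_mul two_ne_zero (hpos _).ne']
        exact Real.log_le_log (by linarith [hpos (k - 1)]) hdouble.le
    _ ≤ ∑ k ∈ Icc 1 N, (Real.log (u (k + 1)) - Real.log (u (k - 1))) :=
        sum_le_sum_of_subset_of_nonneg (filter_subset _ _) fun k _ _ =>
          sub_nonneg.mpr (hlog_mono (by omega))
    _ = Real.log (u (N + 1)) + Real.log (u N) - Real.log (u 1) - Real.log (u 0) :=
        sum_Icc_sub_pred_eq (fun j => Real.log (u j)) N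
    _ ≤ 2 * (Real.log C - Real.log (u 0)) := by
        have hlog_le : ∀ j, Real.log (u j) ≤ Real.log C := fun j =>
          Real.log_le_log (hpos j) (hC j)
        linarith [hlog_le (N + 1), hlog_le N, hlog_mono (Nat.zero_le 1)]

theorem card_filter_doubling_le_three_mul_log {u : ℕ → ℝ} (hu : Monotone u) (hu₀ : 1 ≤ u 0)
    {C : ℝ} (hC : ∀ j, u j ≤ C) (N : ℕ) :
    #{k ∈ Icc 1 N | 2 * u (k - 1) < u (k + 1)} ≤ 3 * Real.log C := by
  have hdoubling := card_filter_doubling_mul_log_two_le hu (by linarith) hC N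
  have hlog_two := mul_le_mul_of_nonneg_left (a := (#{k ∈ Icc 1 N | 2 * u (k - 1) < u (k + 1)} : ℝ))
    (by linarith [Real.log_two_gt_d9] : (2 / 3 : ℝ) ≤ Real.log 2) (Nat.cast_nonneg _)
  linarith [Real.log_nonneg hu₀]

theorem cast_card_filter_not {α : Type*} (s : Finset α) (p : α → Prop) [DecidablePred p] :
    (#{a ∈ s | ¬p a} : ℝ) = #s - #{a ∈ s | p a} := by
  rw [eq_sub_iff_add_eq', ← Nat.cast_add, card_filter_add_card_filter_not]

theorem monotone_card_filter_le_add {P : Type*} [Fintype P] (F : P → ℝ) (c : ℝ) :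
    Monotone fun s => #(univ.filter fun p => F p ≤ c + s) := fun _ _ hst =>
  card_le_card (monotone_filter_right _ fun _ _ hp => hp.trans (by linarith))

theorem filter_sublevel_sandwich {P : Type*} [Fintype P] {F G : P → ℝ} {a b : P}
    (ha : ∀ p, F a ≤ F p) (hb : ∀ p, G b ≤ G p) {M : ℝ}
    (hosc : ∀ p q, (F p - G p) - (F q - G q) ≤ M) (t : ℝ) :
    univ.filter (fun p => F p ≤ F a + (t - M)) ⊆ univ.filter (fun p => G p ≤ G b + t) ∧
      univ.filter (fun p => G p ≤ G b + t) ⊆ univ.filter (fun p => F p ≤ F a + (t + M)) := by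
  simp only [subset_iff, mem_filter, mem_univ, true_and]
  exact ⟨fun p hp => by linarith [ha b, hosc b p], fun p hp => by linarith [hb a, hosc p a]⟩

theorem nonempty_of_integral_ne_zero {α G : Type*} [MeasurableSpace α] [NormedAddCommGroup G]
    [NormedSpace ℝ G] {μ : Measure α} {f : α → G} (h : ∫ x, f x ∂μ ≠ 0) : Nonempty α := by
  by_contra hα
  rw [not_nonempty_iff] at hα
  exact h integral_of_isEmpty

theorem density_levelset_growth_general
    {𝒳 P : Type*} [MeasurableSpace 𝒳] [Fintype P]
    {n : ℕ} (x : Fin n → 𝒳)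
    (ν : Measure 𝒳) (f : P → 𝒳 → ℝ)
    (hfpos : ∀ (p : P) (xx : 𝒳), 0 < f p xx)
    (hfprob : ∀ p : P, ∫ xx, f p xx ∂ν = 1)
    (M : ℝ) (hM : ∀ (p q : P) (xx : 𝒳), |Real.log (f p xx / f q xx)| ≤ M)
    (LS : P → ℝ) (hLS : ∀ p, LS p = ∑ j, -Real.log (f p (x j)))
    (LSm : Fin n → P → ℝ)
    (hLSm : ∀ i p, LSm i p = ∑ j ∈ Finset.univ.erase i, -Real.log (f p (x j)))
    (g : P) (hg : ∀ p, LS g ≤ LS p)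
    (gm : Fin n → P) (hgm : ∀ i p, LSm i (gm i) ≤ LSm i p)
    (Pt : ℝ → Finset P)
    (hPt : ∀ s, Pt s = Finset.univ.filter fun p => LS p ≤ LS g + s)
    (Pti : ℝ → Fin n → Finset P)
    (hPti : ∀ s i, Pti s i = Finset.univ.filter fun p => LSm i p ≤ LSm i (gm i) + s)
    (N : ℕ) (hN : N = ⌈12 * Real.log (Fintype.card P)⌉₊) :
    ((((Finset.Icc 1 N).filter fun k : ℕ =>
        2 * ((Pt ((k : ℝ) * M - M)).card : ℝ) < ((Pt ((k : ℝ) * M + M)).card : ℝ)).card : ℝ)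
      ≤ 3 * Real.log (Fintype.card P)) ∧
    ((3 / 4 : ℝ) * N ≤
      (((Finset.Icc 1 N).filter fun k : ℕ =>
        ((Pt ((k : ℝ) * M + M)).card : ℝ) ≤ 2 * ((Pt ((k : ℝ) * M - M)).card : ℝ) ∧
        ∀ i : Fin n, Pt ((k : ℝ) * M - M) ⊆ Pti ((k : ℝ) * M) i ∧
          Pti ((k : ℝ) * M) i ⊆ Pt ((k : ℝ) * M + M)).card : ℝ)) := by
  obtain ⟨x₀⟩ : Nonempty 𝒳 := nonempty_of_integral_ne_zero (by rw [hfprob g]; exact one_ne_zero)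
  have hM₀ : 0 ≤ M := (abs_nonneg _).trans (hM g g x₀)
  have hlog_sub_le : ∀ p q xx, Real.log (f p xx) - Real.log (f q xx) ≤ M := fun p q xx => by
    rw [← Real.log_div (hfpos p xx).ne' (hfpos q xx).ne']
    exact (le_abs_self _).trans (hM p q xx)
  have hsandwich : ∀ t i, Pt (t - M) ⊆ Pti t i ∧ Pti t i ⊆ Pt (t + M) := fun t i => by
    rw [hPt, hPt, hPti]
    refine filter_sublevel_sandwich hg (hgm i) (fun p q => ?_) t
    have hdrop : ∀ p, LS p - LSm i p = -Real.log (f p (x i)) := fun p => by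
      rw [hLS, hLSm, ← add_sum_erase _ _ (mem_univ i), add_sub_cancel_right]
    rw [hdrop, hdrop]
    linarith [hlog_sub_le q p (x i)]
  set u : ℕ → ℝ := fun j => #(Pt (j * M))
  have hu : Monotone u := by
    simp only [u, hPt]
    exact Nat.mono_cast.comp ((monotone_card_filter_le_add LS (LS g)).comp
      ((monotone_mul_right_of_nonneg hM₀).comp Nat.mono_cast))
  have hu₀ : 1 ≤ u 0 := by
    simp only [u, hPt, Nat.one_le_cast, one_le_card]
    exact ⟨g, by simp⟩
  have hbad_eq : {k ∈ Icc 1 N | 2 * (#(Pt ((k : ℕ) * M - M)) : ℝ) < #(Pt ((k : ℕ) * M + M))} =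
      {k ∈ Icc 1 N | 2 * u (k - 1) < u (k + 1)} := filter_congr fun k hk => by
    simp only [u, Nat.cast_sub (mem_Icc.mp hk).1, Nat.cast_add, Nat.cast_one, sub_mul, add_mul,
      one_mul]
  have hbad := hbad_eq ▸ card_filter_doubling_le_three_mul_log hu hu₀
    (fun j => Nat.cast_le.mpr (card_le_univ (Pt (j * M)))) N
  refine ⟨hbad, ?_⟩
  simp only [filter_congr fun (k : ℕ) _ => and_iff_left fun i => hsandwich ((k : ℝ) * M) i,
    ← not_lt, cast_card_filter_not, Nat.card_Icc, add_tsub_cancel_right]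
  have hN_ge : 12 * Real.log (Fintype.card P) ≤ N := hN ▸ Nat.le_ceil _
  linarith

/-- **Level-set growth for density classes under log loss.**
`P` is a finite class (`|P| ≥ 2`) of strictly positive probability densities (w.r.t. a
common dominating measure `ν`) with uniformly bounded log-likelihood ratios
`|log(p(x)/q(x))| ≤ M`.  With the counting measure (`Finset.card`) and the grid
`𝒯 = {M, 2M, …, N·M}`, `N = ⌈12 ln|P|⌉`: the number of tolerances `t = k·M ∈ 𝒯` with
`|𝒫_{t+M}| > 2|𝒫_{t−M}|` is at most `3 ln|P|`, and consequently at least `(3/4)·|𝒯|`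
tolerances satisfy both `|𝒫_{t+M}| ≤ 2|𝒫_{t−M}|` and `𝒫_{t−M} ⊆ 𝒫_{t,i} ⊆ 𝒫_{t+M}` for
all `i`. -/
theorem density_levelset_growth
    {𝒳 P : Type*} [MeasurableSpace 𝒳] [Fintype P] (hP : 2 ≤ Fintype.card P)
    {n : ℕ} (x : Fin n → 𝒳)
    (ν : Measure 𝒳) (f : P → 𝒳 → ℝ)
    (hfpos : ∀ (p : P) (xx : 𝒳), 0 < f p xx)
    (hfprob : ∀ p : P, ∫ xx, f p xx ∂ν = 1)
    (M : ℝ) (hM : ∀ (p q : P) (xx : 𝒳), |Real.log (f p xx / f q xx)| ≤ M)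
    (LS : P → ℝ) (hLS : ∀ p, LS p = ∑ j, -Real.log (f p (x j)))
    (LSm : Fin n → P → ℝ)
    (hLSm : ∀ i p, LSm i p = ∑ j ∈ Finset.univ.erase i, -Real.log (f p (x j)))
    (g : P) (hg : ∀ p, LS g ≤ LS p)
    (gm : Fin n → P) (hgm : ∀ i p, LSm i (gm i) ≤ LSm i p)
    (Pt : ℝ → Finset P)
    (hPt : ∀ s, Pt s = Finset.univ.filter fun p => LS p ≤ LS g + s)
    (Pti : ℝ → Fin n → Finset P)
    (hPti : ∀ s i, Pti s i = Finset.univ.filter fun p => LSm i p ≤ LSm i (gm i) + s)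
    (N : ℕ) (hN : N = ⌈12 * Real.log (Fintype.card P)⌉₊) :
    ((((Finset.Icc 1 N).filter fun k : ℕ =>
        2 * ((Pt ((k : ℝ) * M - M)).card : ℝ) < ((Pt ((k : ℝ) * M + M)).card : ℝ)).card : ℝ)
      ≤ 3 * Real.log (Fintype.card P)) ∧
    ((3 / 4 : ℝ) * N ≤
      (((Finset.Icc 1 N).filter fun k : ℕ =>
        ((Pt ((k : ℝ) * M + M)).card : ℝ) ≤ 2 * ((Pt ((k : ℝ) * M - M)).card : ℝ) ∧
        ∀ i : Fin n, Pt ((k : ℝ) * M - M) ⊆ Pti ((k : ℝ) * M) i ∧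
          Pti ((k : ℝ) * M) i ⊆ Pt ((k : ℝ) * M + M)).card : ℝ)) :=
  density_levelset_growth_general x ν f hfpos hfprob M hM LS hLS LSm hLSm g hg gm hgm Pt hPt Pti
    hPti N hN
end

section
/- Ellipsoid containment for logistic level sets: Assume ‖x_i‖₂ ≤ R for all i, let ℋ = {θ ∈ ℝ^d : ‖θ‖₂ ≤ r} with r, R > 0, and assume A = Σ_{i=1}^n x_i x_iᵀ is positive definite (λ_min(A) > 0). Fix θ* ∈ argmin_{θ∈ℋ} L_S(θ). For t ≥ 0 define the ellipsoid ℰ_t = {θ ∈ ℝ^d : (θ−θ*)ᵀA(θ−θ*) ≤ t} and its truncation ℰ_t^< = ℰ_t ∩ {θ ∈ ℝ^d : ∇L_S(θ*)ᵀ(θ−θ*) ≤ 0}. Then ℰ_{rR}^< ⊆ ℋ_{rR}, and the Lebesgue volumes satisfy vol(ℰ_{rR}^<) ≥ (1/2)·vol(ℰ_{rR}). -/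
open scoped RealInnerProductSpace
open MeasureTheory

/-!
The logistic loss `z ↦ log (1 + e⁻ᶻ)` has a 1-Lipschitz derivative, so each summand of `L`, and
hence `L`, lies below its quadratic Taylor majorant at `θs`:
`L θ ≤ L θs + ⟪∇L θs, θ - θs⟫ + ½ ∑ ⟪x_i, θ - θs⟫²` (the labels drop out since `y_i² = 1`).
On the truncated ellipsoid the linear term is nonpositive and the quadratic one is at most `rR/2`.
For the volume bound, the point reflection through `θs` preserves Lebesgue measure and the
ellipsoid, and maps the other half of the ellipsoid into the truncated one.
-/

theorem le_add_mul_add_sq_of_hasDerivAt_of_nonneg {f f' : ℝ → ℝ} {K : ℝ}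
    (hf : ∀ x, HasDerivAt f (f' x) x) (hf' : ∀ a b, a ≤ b → f' b - f' a ≤ K * (b - a))
    (z : ℝ) {h : ℝ} (hh : 0 ≤ h) : f (z + h) ≤ f z + f' z * h + K / 2 * h ^ 2 := by
  let G u := f (z + u) - f' z * u - K / 2 * u ^ 2
  have hG : ∀ u, HasDerivAt G (f' (z + u) - f' z - K * u) u := fun u => by
    have := (((hf (z + u)).comp_const_add z u).sub ((hasDerivAt_id u).const_mul (f' z))).sub
      ((hasDerivAt_pow 2 u).const_mul (K / 2))
    exact this.congr_deriv (by simp only [Nat.cast_ofNat]; ring)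
  have hanti : AntitoneOn G (Set.Ici 0) :=
    antitoneOn_of_hasDerivWithinAt_nonpos (convex_Ici 0)
      (HasDerivAt.continuousOn fun u _ => hG u) (fun u _ => (hG u).hasDerivWithinAt)
      fun u hu => by
        rw [interior_Ici] at hu
        linarith [hf' z (z + u) (by linarith [hu.out])]
  have hG_le : G h ≤ G 0 := hanti Set.self_mem_Ici (Set.mem_Ici.2 hh) hh
  norm_num [G] at hG_le
  linarith

theorem le_add_mul_add_sq_of_hasDerivAt {f f' : ℝ → ℝ} {K : ℝ}
    (hf : ∀ x, HasDerivAt f (f' x) x) (hf' : ∀ a b, a ≤ b → f' b - f' a ≤ K * (b - a))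
    (z h : ℝ) : f (z + h) ≤ f z + f' z * h + K / 2 * h ^ 2 := by
  rcases le_total 0 h with hh | hh
  · exact le_add_mul_add_sq_of_hasDerivAt_of_nonneg hf hf' z hh
  · have hfneg : ∀ x, HasDerivAt (fun x => f (-x)) (-f' (-x)) x := fun x => by
      simpa [Function.comp_def] using (hf (-x)).scomp x (hasDerivAt_neg x)
    have hreflected := le_add_mul_add_sq_of_hasDerivAt_of_nonneg (K := K) hfneg
      (fun a b hab => by linarith [hf' (-b) (-a) (by linarith)]) (-z) (neg_nonneg.2 hh)
    simp only [neg_add, neg_neg, mul_neg, neg_mul, even_two.neg_pow] at hreflected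
    linarith

noncomputable def logisticLoss (z : ℝ) : ℝ := Real.log (1 + Real.exp (-z))

noncomputable def logisticLossDeriv (z : ℝ) : ℝ := -(1 + Real.exp z)⁻¹

theorem hasDerivAt_logisticLoss (z : ℝ) : HasDerivAt logisticLoss (logisticLossDeriv z) z := by
  refine ((((hasDerivAt_neg z).exp).const_add 1).log (by positivity)).congr_deriv ?_
  rw [logisticLossDeriv, Real.exp_neg]
  field_simp
  ring

theorem logisticLossDeriv_sub_le {a b : ℝ} (hab : a ≤ b) :
    logisticLossDeriv b - logisticLossDeriv a ≤ b - a := by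
  have hexp : Real.exp b - Real.exp a ≤ (b - a) * Real.exp b := by
    have := Real.add_one_le_exp (a - b)
    rw [Real.exp_sub, le_div_iff₀ (Real.exp_pos b)] at this
    linarith
  have ha := Real.exp_pos a
  have hb := Real.exp_pos b
  rw [logisticLossDeriv, logisticLossDeriv, neg_sub_neg, inv_sub_inv (by positivity) (by positivity),
    div_le_iff₀ (by positivity)]
  nlinarith [mul_nonneg (sub_nonneg.2 hab) (mul_pos ha hb).le]

section Ridge

variable {E ι : Type*} [NormedAddCommGroup E] [InnerProductSpace ℝ E] [CompleteSpace E]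
  [Fintype ι] {g g' : ℝ → ℝ}

theorem hasGradientAt_sum_comp_inner (hg : ∀ t, HasDerivAt g (g' t) t) (a : ι → E) (θ : E) :
    HasGradientAt (fun θ => ∑ i, g ⟪a i, θ⟫) (∑ i, g' ⟪a i, θ⟫ • a i) θ := by
  rw [hasGradientAt_iff_hasFDerivAt, map_sum]
  refine HasFDerivAt.fun_sum fun i _ => ?_
  rw [map_smul]
  exact (hg _).comp_hasFDerivAt θ (innerSL ℝ (a i)).hasFDerivAt

theorem sum_comp_inner_add_le {K : ℝ} (hg : ∀ t, HasDerivAt g (g' t) t)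
    (hg' : ∀ s t, s ≤ t → g' t - g' s ≤ K * (t - s)) (a : ι → E) (θ v : E) :
    ∑ i, g ⟪a i, θ + v⟫ ≤ ∑ i, g ⟪a i, θ⟫ + ⟪gradient (fun θ => ∑ i, g ⟪a i, θ⟫) θ, v⟫
      + K / 2 * ∑ i, ⟪a i, v⟫ ^ 2 := by
  rw [(hasGradientAt_sum_comp_inner hg a θ).gradient, sum_inner, Finset.mul_sum,
    ← Finset.sum_add_distrib, ← Finset.sum_add_distrib]
  gcongr with i
  rw [inner_add_right, real_inner_smul_left]
  exact le_add_mul_add_sq_of_hasDerivAt hg hg' _ _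

end Ridge

theorem measure_le_two_mul_measure_inter_halfspace {E : Type*} [NormedAddCommGroup E]
    [InnerProductSpace ℝ E] [MeasurableSpace E] [MeasurableAdd E] [MeasurableNeg E]
    (μ : Measure E) [μ.IsAddLeftInvariant] [μ.IsNegInvariant] {s : Set E} {c : E}
    (hs : ∀ v, c + v ∈ s → c - v ∈ s) (w : E) :
    μ s ≤ 2 * μ (s ∩ {θ | ⟪w, θ - c⟫ ≤ 0}) := by
  set H := s ∩ {θ | ⟪w, θ - c⟫ ≤ 0}
  have hcover : s ⊆ H ∪ (fun θ => (c + c) - θ) ⁻¹' H := by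
    intro θ hθ
    by_cases hw : ⟪w, θ - c⟫ ≤ 0
    · exact Or.inl ⟨hθ, hw⟩
    · have hrefl : c + c - θ = c - (θ - c) := by abel
      refine Or.inr ⟨?_, ?_⟩
      · change c + c - θ ∈ s
        rw [hrefl]
        exact hs _ (by rwa [add_sub_cancel])
      · simp only [Set.mem_ofPred_eq, hrefl, sub_sub_cancel_left, inner_neg_right]
        linarith
  calc μ s ≤ μ (H ∪ (fun θ => (c + c) - θ) ⁻¹' H) := measure_mono hcover
    _ ≤ μ H + μ ((fun θ => (c + c) - θ) ⁻¹' H) := measure_union_le _ _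
    _ = 2 * μ H := by
      have hemb : MeasurableEmbedding fun θ => (c + c) - θ :=
        (MeasurableEquiv.subLeft (c + c)).measurableEmbedding
      rw [(Measure.measurePreserving_sub_left μ (c + c)).measure_preimage_emb hemb, two_mul]

theorem logistic_ellipsoid_containment_general
    {d n : ℕ} (r R : ℝ)
    (x : Fin n → EuclideanSpace ℝ (Fin d))
    (y : Fin n → ℝ) (hy : ∀ i, y i = 1 ∨ y i = -1)
    (L : EuclideanSpace ℝ (Fin d) → ℝ)
    (hL : ∀ θ, L θ = ∑ i, -Real.log (1 / (1 + Real.exp (-(y i * ⟪x i, θ⟫)))))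
    (θs : EuclideanSpace ℝ (Fin d)) (hθs : ‖θs‖ ≤ r)
    -- ℋ_A = {ϑ : inf_{θ ∈ ℋ} ‖ϑ − θ‖_A² ≤ rR}
    (HA : Set (EuclideanSpace ℝ (Fin d)))
    (hHA : HA = {ϑ | ∃ θ : EuclideanSpace ℝ (Fin d),
      ‖θ‖ ≤ r ∧ ∑ i, ⟪x i, ϑ - θ⟫ ^ 2 ≤ r * R})
    (E : ℝ → Set (EuclideanSpace ℝ (Fin d)))
    (hE : ∀ t, E t = {θ | ∑ i, ⟪x i, θ - θs⟫ ^ 2 ≤ t})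
    (Elt : ℝ → Set (EuclideanSpace ℝ (Fin d)))
    (hElt : ∀ t, Elt t = E t ∩ {θ | ⟪gradient L θs, θ - θs⟫ ≤ 0})
    (Hlev : Set (EuclideanSpace ℝ (Fin d)))
    (hHlev : Hlev = {θ ∈ HA | L θ ≤ L θs + r * R}) :
    Elt (r * R) ⊆ Hlev ∧
    MeasureTheory.volume (E (r * R)) ≤ 2 * MeasureTheory.volume (Elt (r * R)) := by
  have hLθ : ∀ θ, L θ = ∑ i, logisticLoss ⟪y i • x i, θ⟫ := fun θ => by
    rw [hL]
    refine Finset.sum_congr rfl fun i _ => ?_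
    rw [logisticLoss, real_inner_smul_left, one_div, Real.log_inv, neg_neg]
  have hsq : ∀ v, ∑ i, ⟪y i • x i, v⟫ ^ 2 = ∑ i, ⟪x i, v⟫ ^ 2 := fun v =>
    Finset.sum_congr rfl fun i _ => by rcases hy i with h | h <;> simp [h]
  rw [hElt, hE]
  refine ⟨?_, measure_le_two_mul_measure_inter_halfspace volume (fun v hv => by simpa using hv) _⟩
  rintro θ ⟨hθE, hθg⟩
  have hS : 0 ≤ ∑ i, ⟪x i, θ - θs⟫ ^ 2 := by positivity
  have hTaylor := sum_comp_inner_add_le (K := 1) hasDerivAt_logisticLoss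
    (fun s t hst => by simpa only [one_mul] using logisticLossDeriv_sub_le hst)
    (fun i => y i • x i) θs (θ - θs)
  rw [add_sub_cancel, ← funext hLθ, ← hLθ, ← hLθ, hsq] at hTaylor
  rw [hHlev, hHA]
  exact ⟨⟨θs, hθs, hθE⟩, by simp only [Set.mem_ofPred_eq] at hθE hθg; linarith⟩

/-- **Ellipsoid containment for logistic level sets.**
Logistic setting with `‖x_i‖ ≤ R`, parameter ball `ℋ = {‖θ‖ ≤ r}`, positive-definite
empirical second-moment form `u ↦ ∑ i ⟪x_i, u⟫²`, and empirical minimizer `θs` over `ℋ`.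
With the ellipsoid `E t = {θ : (θ−θs)ᵀA(θ−θs) ≤ t}` and its truncation
`Elt t = E t ∩ {θ : ⟪∇L(θs), θ−θs⟫ ≤ 0}`, and the level set
`Hlev = {θ ∈ ℋ_A : L(θ) ≤ L(θs) + rR}`, we have `Elt (rR) ⊆ Hlev` and
`vol(Elt (rR)) ≥ (1/2)·vol(E (rR))`. -/
theorem logistic_ellipsoid_containment
    {d n : ℕ} (r R : ℝ) (hr : 0 < r) (hR : 0 < R)
    (x : Fin n → EuclideanSpace ℝ (Fin d)) (hx : ∀ i, ‖x i‖ ≤ R)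
    (y : Fin n → ℝ) (hy : ∀ i, y i = 1 ∨ y i = -1)
    -- A = ∑ x_i x_iᵀ is positive definite
    (hA : ∀ u : EuclideanSpace ℝ (Fin d), u ≠ 0 → 0 < ∑ i, ⟪x i, u⟫ ^ 2)
    (L : EuclideanSpace ℝ (Fin d) → ℝ)
    (hL : ∀ θ, L θ = ∑ i, -Real.log (1 / (1 + Real.exp (-(y i * ⟪x i, θ⟫)))))
    (θs : EuclideanSpace ℝ (Fin d)) (hθs : ‖θs‖ ≤ r)
    (hθsmin : ∀ θ : EuclideanSpace ℝ (Fin d), ‖θ‖ ≤ r → L θs ≤ L θ)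
    -- ℋ_A = {ϑ : inf_{θ ∈ ℋ} ‖ϑ − θ‖_A² ≤ rR}
    (HA : Set (EuclideanSpace ℝ (Fin d)))
    (hHA : HA = {ϑ | ∃ θ : EuclideanSpace ℝ (Fin d),
      ‖θ‖ ≤ r ∧ ∑ i, ⟪x i, ϑ - θ⟫ ^ 2 ≤ r * R})
    (E : ℝ → Set (EuclideanSpace ℝ (Fin d)))
    (hE : ∀ t, E t = {θ | ∑ i, ⟪x i, θ - θs⟫ ^ 2 ≤ t})
    (Elt : ℝ → Set (EuclideanSpace ℝ (Fin d)))
    (hElt : ∀ t, Elt t = E t ∩ {θ | ⟪gradient L θs, θ - θs⟫ ≤ 0})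
    (Hlev : Set (EuclideanSpace ℝ (Fin d)))
    (hHlev : Hlev = {θ ∈ HA | L θ ≤ L θs + r * R}) :
    Elt (r * R) ⊆ Hlev ∧
    MeasureTheory.volume (E (r * R)) ≤ 2 * MeasureTheory.volume (Elt (r * R)) :=
  logistic_ellipsoid_containment_general r R x y hy L hL θs hθs HA hHA E hE Elt hElt Hlev hHlev
end

section
/- Level-set growth for logistic regression: Assume ‖x_i‖₂ ≤ R for all i, let ℋ = {θ ∈ ℝ^d : ‖θ‖₂ ≤ r} with r, R > 0 and d ≥ 1, and assume A = Σ_{i=1}^n x_i x_iᵀ is positive definite with λ_min(A) > 0. Let μ_B be the uniform probability measure on B = {θ : θᵀAθ ≤ (√n·rR + √(rR))²}, let Δ = 1 + rR + √(rR/λ_min(A))·R, and let 𝒯 = {Δ, 2Δ, …, N·Δ} with N = ⌈16 d log(max(8, 2nrR))⌉. Then: (i) for every t ≥ 0 and every i ∈ {1,…,n}, ℋ_{t−Δ} ⊆ ℋ_{t,i} ⊆ ℋ_{t+Δ}; and (ii) the number of tolerances t ∈ 𝒯 with μ_B(ℋ_{t+Δ}) > 2·μ_B(ℋ_{t−Δ})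 is at most 4 d log(max(8, 2nrR)), so at least (3/4)·|𝒯| tolerances t ∈ 𝒯 satisfy μ_B(ℋ_{t+Δ}) ≤ 2·μ_B(ℋ_{t−Δ}). -/
open MeasureTheory
open scoped RealInnerProductSpace Classical Pointwise

section LlgHelpers

lemma llg_eq (z : ℝ) : -Real.log (1 / (1 + Real.exp z)) = Real.log (1 + Real.exp z) := by
  rw [one_div, Real.log_inv, neg_neg]

lemma llg_pos_arg (z : ℝ) : (0:ℝ) < 1 + Real.exp z := by positivity

lemma llg_nonneg (z : ℝ) : 0 ≤ Real.log (1 + Real.exp z) :=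
  Real.log_nonneg (by nlinarith [Real.exp_pos z])

lemma llg_le (z : ℝ) : Real.log (1 + Real.exp z) ≤ 1 + |z| := by
  have h1 : (1:ℝ) ≤ Real.exp |z| := Real.one_le_exp (abs_nonneg z)
  have h2 : Real.exp z ≤ Real.exp |z| := Real.exp_le_exp.2 (le_abs_self z)
  have h3 : Real.log (1 + Real.exp z) ≤ Real.log (2 * Real.exp |z|) := by
    apply Real.log_le_log (llg_pos_arg z); nlinarith
  have h4 : Real.log (2 * Real.exp |z|) = Real.log 2 + |z| := by
    rw [Real.log_mul (by norm_num) (Real.exp_ne_zero _), Real.log_exp]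
  have h5 : Real.log 2 ≤ 1 := by
    have := Real.log_two_lt_d9; linarith
  linarith

lemma llg_lip (a b : ℝ) :
    Real.log (1 + Real.exp a) - Real.log (1 + Real.exp b) ≤ |a - b| := by
  rcases le_total a b with h | h
  · have : Real.log (1 + Real.exp a) ≤ Real.log (1 + Real.exp b) := by
      apply Real.log_le_log (llg_pos_arg a)
      have := Real.exp_le_exp.2 h; linarith
    have := abs_nonneg (a - b); linarith
  · have h1 : (1:ℝ) + Real.exp a ≤ Real.exp (a - b) * (1 + Real.exp b) := by
      have e1 : (1:ℝ) ≤ Real.exp (a - b) := Real.one_le_exp (by linarith)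
      have e2 : Real.exp (a - b) * Real.exp b = Real.exp a := by
        rw [← Real.exp_add]; ring_nf
      nlinarith [Real.exp_pos b, Real.exp_pos (a-b)]
    have h2 : Real.log (1 + Real.exp a) ≤ Real.log (Real.exp (a-b) * (1 + Real.exp b)) :=
      Real.log_le_log (llg_pos_arg a) h1
    rw [Real.log_mul (Real.exp_ne_zero _) (ne_of_gt (llg_pos_arg b)), Real.log_exp] at h2
    have : |a - b| = a - b := abs_of_nonneg (by linarith)
    linarith

lemma llg_chain (g : ℕ → ENNReal) (hg : Monotone g) (a : ENNReal) (ha : a ≤ g 1)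
    (S : Finset ℕ) (h2 : ∀ k ∈ S, 2 ≤ k) (hpar : ∀ k ∈ S, ∀ l ∈ S, k % 2 = l % 2)
    (hdb : ∀ k ∈ S, 2 * g (k - 1) < g (k + 1)) :
    ∀ m : ℕ, (∀ k ∈ S, k ≤ m) → 2 ^ S.card * a ≤ g (m + 1) := by
  induction S using Finset.strongInduction with
  | _ S ih =>
    intro m hm
    rcases S.eq_empty_or_nonempty with rfl | hne
    · simpa using le_trans ha (hg (by omega))
    · set k := S.max' hne with hk
      have hkS : k ∈ S := S.max'_mem hne
      have hk2 : 2 ≤ k := h2 k hkS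
      have hsub : S.erase k ⊂ S := Finset.erase_ssubset hkS
      have hstep : 2 ^ (S.erase k).card * a ≤ g (k - 2 + 1) := by
        apply ih _ hsub (fun l hl => h2 l (Finset.mem_of_mem_erase hl))
          (fun l hl l' hl' => hpar l (Finset.mem_of_mem_erase hl) l' (Finset.mem_of_mem_erase hl'))
          (fun l hl => hdb l (Finset.mem_of_mem_erase hl))
        intro l hl
        have hlS := Finset.mem_of_mem_erase hl
        have hlk : l ≤ k := S.le_max' l hlS
        have hlne : l ≠ k := Finset.ne_of_mem_erase hl
        have := hpar l hlS k hkS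
        omega
      have hcard : S.card = (S.erase k).card + 1 := by
        rw [Finset.card_erase_of_mem hkS]
        have : 1 ≤ S.card := Finset.card_pos.2 hne
        omega
      have h21 : (k : ℕ) - 2 + 1 = k - 1 := by omega
      rw [h21] at hstep
      calc 2 ^ S.card * a = 2 * (2 ^ (S.erase k).card * a) := by
            rw [hcard, pow_succ]; ring
        _ ≤ 2 * g (k - 1) := mul_le_mul_right hstep 2
        _ ≤ g (k + 1) := le_of_lt (hdb k hkS)
        _ ≤ g (m + 1) := hg (by have := hm k hkS; omega)

lemma llg_numeric (x : ℝ) (hx : 0 ≤ x) :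
    (1 + Real.sqrt x) ^ 10 ≤ (max 8 (2 * x)) ^ 6 := by
  set t := Real.sqrt x with htdef
  have ht : 0 ≤ t := Real.sqrt_nonneg x
  have htx : t ^ 2 = x := Real.sq_sqrt hx
  rcases le_or_gt x 4 with h | h
  · have ht2 : t ≤ 2 := by nlinarith
    have h8 : (8:ℝ) ≤ max 8 (2*x) := le_max_left _ _
    calc (1 + t)^10 ≤ 3^10 := by
          apply pow_le_pow_left₀ (by linarith) (by linarith)
      _ ≤ (8:ℝ)^6 := by norm_num
      _ ≤ (max 8 (2*x))^6 := by apply pow_le_pow_left₀ (by norm_num) h8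
  · have hM : max (8:ℝ) (2*x) = 2*x := max_eq_right (by linarith)
    have ht2 : 2 ≤ t := by nlinarith
    rw [hM]
    calc (1 + t)^10 ≤ ((3/2)*t)^10 := by
          apply pow_le_pow_left₀ (by linarith) (by linarith)
      _ = (3/2:ℝ)^10 * t^10 := by ring
      _ ≤ 64 * t^12 := by nlinarith [pow_nonneg ht 10, pow_nonneg ht 12, sq_nonneg (t^5)]
      _ = (2 * t^2)^6 := by ring
      _ = (2*x)^6 := by rw [htx]

end LlgHelpers

section QformHelpers
variable {d n : ℕ} (x : Fin n → EuclideanSpace ℝ (Fin d))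

lemma llg_Qf_nonneg (v : EuclideanSpace ℝ (Fin d)) : 0 ≤ ∑ i, ⟪x i, v⟫ ^ 2 :=
  Finset.sum_nonneg fun _ _ => sq_nonneg _

lemma llg_Qf_smul (c : ℝ) (v : EuclideanSpace ℝ (Fin d)) :
    ∑ i, ⟪x i, c • v⟫ ^ 2 = c ^ 2 * ∑ i, ⟪x i, v⟫ ^ 2 := by
  rw [Finset.mul_sum]
  congr 1; ext i
  rw [real_inner_smul_right]; ring

lemma llg_Qf_sum_abs_le (v : EuclideanSpace ℝ (Fin d)) :
    ∑ i, |⟪x i, v⟫| ≤ Real.sqrt (n * ∑ i, ⟪x i, v⟫ ^ 2) := by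
  have h0 : 0 ≤ ∑ i, |⟪x i, v⟫| := Finset.sum_nonneg fun i _ => abs_nonneg _
  rw [Real.le_sqrt h0]
  have := Finset.sum_mul_sq_le_sq_mul_sq Finset.univ (fun i => |⟪x i, v⟫|) (fun _ => 1)
  simp only [mul_one, one_pow] at this
  calc (∑ i, |⟪x i, v⟫|) ^ 2 ≤ (∑ i, |⟪x i, v⟫| ^ 2) * ∑ _i : Fin n, (1:ℝ) := this
    _ = n * ∑ i, ⟪x i, v⟫ ^ 2 := by
        simp [sq_abs, mul_comm]
  positivity

lemma llg_Qf_tri (u w : EuclideanSpace ℝ (Fin d)) :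
    ∑ i, ⟪x i, u + w⟫ ^ 2 ≤
      (Real.sqrt (∑ i, ⟪x i, u⟫ ^ 2) + Real.sqrt (∑ i, ⟪x i, w⟫ ^ 2)) ^ 2 := by
  have hcs := Finset.sum_mul_sq_le_sq_mul_sq Finset.univ (fun i => ⟪x i, u⟫) (fun i => ⟪x i, w⟫)
  have hab : ∑ i, ⟪x i, u⟫ * ⟪x i, w⟫ ≤
      Real.sqrt (∑ i, ⟪x i, u⟫ ^ 2) * Real.sqrt (∑ i, ⟪x i, w⟫ ^ 2) := by
    rw [← Real.sqrt_mul (llg_Qf_nonneg x u)]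
    calc ∑ i, ⟪x i, u⟫ * ⟪x i, w⟫ ≤ |∑ i, ⟪x i, u⟫ * ⟪x i, w⟫| := le_abs_self _
      _ = Real.sqrt ((∑ i, ⟪x i, u⟫ * ⟪x i, w⟫) ^ 2) := (Real.sqrt_sq_eq_abs _).symm
      _ ≤ _ := Real.sqrt_le_sqrt hcs
  have hexp : ∑ i, ⟪x i, u + w⟫ ^ 2 =
      (∑ i, ⟪x i, u⟫ ^ 2) + 2 * (∑ i, ⟪x i, u⟫ * ⟪x i, w⟫) + ∑ i, ⟪x i, w⟫ ^ 2 := by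
    calc ∑ i, ⟪x i, u + w⟫ ^ 2
        = ∑ i, (⟪x i, u⟫ ^ 2 + 2 * (⟪x i, u⟫ * ⟪x i, w⟫) + ⟪x i, w⟫ ^ 2) := by
          apply Finset.sum_congr rfl; intro i _; rw [inner_add_right]; ring
      _ = _ := by rw [Finset.sum_add_distrib, Finset.sum_add_distrib, Finset.mul_sum]
  have h1 := Real.sq_sqrt (llg_Qf_nonneg x u)
  have h2 := Real.sq_sqrt (llg_Qf_nonneg x w)
  nlinarith [Real.sqrt_nonneg (∑ i, ⟪x i, u⟫ ^ 2), Real.sqrt_nonneg (∑ i, ⟪x i, w⟫ ^ 2)]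

end QformHelpers

section VolHelpers
variable {d : ℕ}

lemma llg_vol_smul (c : ℝ) (s : Set (EuclideanSpace ℝ (Fin d))) :
    volume (c • s) = ENNReal.ofReal (|c| ^ d) * volume s := by
  rw [Measure.addHaar_smul, abs_pow, finrank_euclideanSpace_fin]

lemma llg_vol_vadd (a : EuclideanSpace ℝ (Fin d)) (s : Set (EuclideanSpace ℝ (Fin d))) :
    volume (a +ᵥ s) = volume s :=
  measure_vadd (μ := volume) a s

end VolHelpers

set_option maxHeartbeats 2000000 in
/-- **Level-set growth for logistic regression.**
Logistic setting with `‖x_i‖ ≤ R`, parameter ball `ℋ = {‖θ‖ ≤ r}`, positive definite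
`A = ∑ x_i x_iᵀ` (quadratic form `u ↦ ∑ i ⟪x_i, u⟫²`) with least eigenvalue `λmin > 0`,
`μ_B` the uniform probability measure on `B = {θ : θᵀAθ ≤ (√n·rR + √(rR))²}`
(encoded via `E ↦ vol(E ∩ B)`), `Δ = 1 + rR + √(rR/λmin)·R`, and grid
`𝒯 = {Δ, 2Δ, …, N·Δ}` with `N = ⌈16 d log(max(8, 2nrR))⌉`.  Then
(i) for every `t ≥ 0` and `i`, `ℋ_{t−Δ} ⊆ ℋ_{t,i} ⊆ ℋ_{t+Δ}`, and
(ii) the number of tolerances `t = kΔ ∈ 𝒯` with `μ_B(ℋ_{t+Δ}) > 2 μ_B(ℋ_{t−Δ})` is at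
most `4 d log(max(8, 2nrR))`, so at least `(3/4)·|𝒯|` satisfy
`μ_B(ℋ_{t+Δ}) ≤ 2 μ_B(ℋ_{t−Δ})`. -/
theorem logistic_levelset_growth
    {d n : ℕ} (hd : 1 ≤ d) (r R : ℝ) (hr : 0 < r) (hR : 0 < R)
    (x : Fin n → EuclideanSpace ℝ (Fin d)) (hx : ∀ i, ‖x i‖ ≤ R)
    (y : Fin n → ℝ) (hy : ∀ i, y i = 1 ∨ y i = -1)
    -- λmin is the least eigenvalue of A, and A is positive definite
    (lammin : ℝ) (hlammin : 0 < lammin)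
    (hlam : IsLeast {c : ℝ | ∃ u : EuclideanSpace ℝ (Fin d), ‖u‖ = 1 ∧
      c = ∑ i, ⟪x i, u⟫ ^ 2} lammin)
    (L : EuclideanSpace ℝ (Fin d) → ℝ)
    (hL : ∀ θ, L θ = ∑ i, -Real.log (1 / (1 + Real.exp (-(y i * ⟪x i, θ⟫)))))
    (Lm : Fin n → EuclideanSpace ℝ (Fin d) → ℝ)
    (hLm : ∀ i θ, Lm i θ = ∑ j ∈ Finset.univ.erase i,
      -Real.log (1 / (1 + Real.exp (-(y j * ⟪x j, θ⟫)))))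
    -- fixed minimizers over the parameter ball ℋ = {‖θ‖ ≤ r}
    (θs : EuclideanSpace ℝ (Fin d)) (hθs : ‖θs‖ ≤ r)
    (hθsmin : ∀ θ : EuclideanSpace ℝ (Fin d), ‖θ‖ ≤ r → L θs ≤ L θ)
    (θsm : Fin n → EuclideanSpace ℝ (Fin d)) (hθsm : ∀ i, ‖θsm i‖ ≤ r)
    (hθsmmin : ∀ i, ∀ θ : EuclideanSpace ℝ (Fin d), ‖θ‖ ≤ r → Lm i (θsm i) ≤ Lm i θ)
    -- ℋ_A = {ϑ : inf_{θ ∈ ℋ} ‖ϑ − θ‖_A² ≤ rR}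
    (HA : Set (EuclideanSpace ℝ (Fin d)))
    (hHA : HA = {ϑ | ∃ θ : EuclideanSpace ℝ (Fin d),
      ‖θ‖ ≤ r ∧ ∑ i, ⟪x i, ϑ - θ⟫ ^ 2 ≤ r * R})
    -- level sets
    (Ht : ℝ → Set (EuclideanSpace ℝ (Fin d)))
    (hHt : ∀ t, Ht t = {θ ∈ HA | L θ ≤ L θs + t})
    (Hti : ℝ → Fin n → Set (EuclideanSpace ℝ (Fin d)))
    (hHti : ∀ t i, Hti t i = {θ ∈ HA | Lm i θ ≤ Lm i (θsm i) + t})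
    -- the ball B and the measure μ_B(E) = vol(E ∩ B)
    (B : Set (EuclideanSpace ℝ (Fin d)))
    (hB : B = {θ | ∑ i, ⟪x i, θ⟫ ^ 2 ≤ (Real.sqrt n * r * R + Real.sqrt (r * R)) ^ 2})
    (μB : Set (EuclideanSpace ℝ (Fin d)) → ENNReal)
    (hμB : ∀ E, μB E = MeasureTheory.volume (E ∩ B))
    (Δ : ℝ) (hΔ : Δ = 1 + r * R + Real.sqrt (r * R / lammin) * R)
    (N : ℕ) (hN : N = ⌈16 * (d : ℝ) * Real.log (max 8 (2 * n * r * R))⌉₊) :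
    -- (i) sandwich
    (∀ t : ℝ, 0 ≤ t → ∀ i : Fin n, Ht (t - Δ) ⊆ Hti t i ∧ Hti t i ⊆ Ht (t + Δ)) ∧
    -- (ii) growth on a majority of the grid
    ((((Finset.Icc 1 N).filter fun k : ℕ =>
        2 * μB (Ht ((k : ℝ) * Δ - Δ)) < μB (Ht ((k : ℝ) * Δ + Δ))).card : ℝ)
      ≤ 4 * (d : ℝ) * Real.log (max 8 (2 * n * r * R))) ∧
    ((3 / 4 : ℝ) * N ≤
      (((Finset.Icc 1 N).filter fun k : ℕ =>
        μB (Ht ((k : ℝ) * Δ + Δ)) ≤ 2 * μB (Ht ((k : ℝ) * Δ - Δ))).card : ℝ)) := by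
  -- basic positivity facts
  have hrR : 0 < r * R := mul_pos hr hR
  have hn : 0 < n := by
    rcases hlam.1 with ⟨u, hu, hval⟩
    by_contra hn0
    push_neg at hn0
    interval_cases n
    simp at hval
    linarith
  -- rewrite L and Lm with positive logistic losses
  have hL' : ∀ θ, L θ = ∑ i, Real.log (1 + Real.exp (-(y i * ⟪x i, θ⟫))) := by
    intro θ; rw [hL]; exact Finset.sum_congr rfl fun i _ => llg_eq _
  have hLm' : ∀ i θ, Lm i θ =
      ∑ j ∈ Finset.univ.erase i, Real.log (1 + Real.exp (-(y j * ⟪x j, θ⟫))) := by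
    intro i θ; rw [hLm]; exact Finset.sum_congr rfl fun j _ => llg_eq _
  have hsplit : ∀ (i : Fin n) θ,
      Lm i θ + Real.log (1 + Real.exp (-(y i * ⟪x i, θ⟫))) = L θ := by
    intro i θ; rw [hL' θ, hLm' i θ]
    exact Finset.sum_erase_add _ _ (Finset.mem_univ i)
  have habsy : ∀ (i : Fin n) (θ : EuclideanSpace ℝ (Fin d)),
      |(-(y i * ⟪x i, θ⟫))| = |⟪x i, θ⟫| := by
    intro i θ; rw [abs_neg, abs_mul]
    rcases hy i with h | h <;> rw [h] <;> simp
  have hinner_r : ∀ (i : Fin n) (θ : EuclideanSpace ℝ (Fin d)), ‖θ‖ ≤ r →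
      |⟪x i, θ⟫| ≤ r * R := by
    intro i θ hθ
    calc |⟪x i, θ⟫| ≤ ‖x i‖ * ‖θ‖ := abs_real_inner_le_norm _ _
      _ ≤ R * r := mul_le_mul (hx i) hθ (norm_nonneg θ) (le_of_lt hR)
      _ = r * R := mul_comm R r
  have hΔ3 : 0 ≤ Real.sqrt (r * R / lammin) * R := by positivity
  have hΔge : 1 + r * R ≤ Δ := by rw [hΔ]; linarith
  have hΔpos : 0 < Δ := by linarith
  have hlamQ : ∀ v : EuclideanSpace ℝ (Fin d), lammin * ‖v‖ ^ 2 ≤ ∑ i, ⟪x i, v⟫ ^ 2 := by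
    intro v
    rcases eq_or_ne v 0 with rfl | hv
    · simp
    · have hnv : 0 < ‖v‖ := norm_pos_iff.2 hv
      have hu : ‖(‖v‖⁻¹ : ℝ) • v‖ = 1 := by
        rw [norm_smul, norm_inv, norm_norm, inv_mul_cancel₀ (ne_of_gt hnv)]
      have hmem : lammin ≤ ∑ i, ⟪x i, (‖v‖⁻¹ : ℝ) • v⟫ ^ 2 :=
        hlam.2 ⟨(‖v‖⁻¹ : ℝ) • v, hu, rfl⟩
      rw [llg_Qf_smul] at hmem
      have hinv : (‖v‖⁻¹ : ℝ) ^ 2 * ‖v‖ ^ 2 = 1 := by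
        field_simp
      nlinarith [sq_nonneg ‖v‖, llg_Qf_nonneg x v]
  have hHAin : ∀ θ ∈ HA, ∀ i : Fin n,
      |⟪x i, θ⟫| ≤ r * R + Real.sqrt (r * R / lammin) * R := by
    intro θ hθ i
    rw [hHA] at hθ
    obtain ⟨θ', hθ'r, hQd⟩ := hθ
    have h1 : |⟪x i, θ - θ'⟫| ≤ R * ‖θ - θ'‖ := by
      calc |⟪x i, θ - θ'⟫| ≤ ‖x i‖ * ‖θ - θ'‖ := abs_real_inner_le_norm _ _
        _ ≤ R * ‖θ - θ'‖ := mul_le_mul_of_nonneg_right (hx i) (norm_nonneg _)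
    have h2 : lammin * ‖θ - θ'‖ ^ 2 ≤ r * R := le_trans (hlamQ _) hQd
    have h3 : ‖θ - θ'‖ ≤ Real.sqrt (r * R / lammin) := by
      rw [Real.le_sqrt (norm_nonneg _), le_div_iff₀ hlammin]
      · nlinarith
      · positivity
    have h4 : ⟪x i, θ⟫ = ⟪x i, θ'⟫ + ⟪x i, θ - θ'⟫ := by
      rw [← inner_add_right]
      congr 1
      abel
    have h5 := hinner_r i θ' hθ'r
    have h6 : |⟪x i, θ - θ'⟫| ≤ Real.sqrt (r * R / lammin) * R := by
      calc |⟪x i, θ - θ'⟫| ≤ R * ‖θ - θ'‖ := h1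
        _ ≤ R * Real.sqrt (r * R / lammin) := mul_le_mul_of_nonneg_left h3 (le_of_lt hR)
        _ = Real.sqrt (r * R / lammin) * R := mul_comm _ _
    calc |⟪x i, θ⟫| ≤ |⟪x i, θ'⟫| + |⟪x i, θ - θ'⟫| := by rw [h4]; exact abs_add_le _ _
      _ ≤ r * R + Real.sqrt (r * R / lammin) * R := add_le_add h5 h6
  -- Part (i)
  have part1 : ∀ t : ℝ, 0 ≤ t → ∀ i : Fin n, Ht (t - Δ) ⊆ Hti t i ∧ Hti t i ⊆ Ht (t + Δ) := by
    intro t ht i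
    constructor
    · intro θ hθ
      rw [hHt] at hθ
      obtain ⟨hθA, hθL⟩ := hθ
      rw [hHti]
      refine ⟨hθA, ?_⟩
      have e1 : Lm i θ ≤ L θ := by
        have h := hsplit i θ
        have := llg_nonneg (-(y i * ⟪x i, θ⟫))
        linarith
      have e2 : L θs ≤ L (θsm i) := hθsmin (θsm i) (hθsm i)
      have e3 : L (θsm i) ≤ Lm i (θsm i) + (1 + r * R) := by
        have hs := hsplit i (θsm i)
        have hb := llg_le (-(y i * ⟪x i, θsm i⟫))
        rw [habsy] at hb
        have := hinner_r i (θsm i) (hθsm i)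
        linarith
      linarith
    · intro θ hθ
      rw [hHti] at hθ
      obtain ⟨hθA, hθL⟩ := hθ
      rw [hHt]
      refine ⟨hθA, ?_⟩
      have e1 : L θ ≤ Lm i θ + Δ := by
        have hs := hsplit i θ
        have hb := llg_le (-(y i * ⟪x i, θ⟫))
        rw [habsy] at hb
        have h2 := hHAin θ hθA i
        rw [hΔ]
        linarith
      have e3 : Lm i (θsm i) ≤ Lm i θs := hθsmmin i θs hθs
      have e4 : Lm i θs ≤ L θs := by
        have h := hsplit i θs
        have := llg_nonneg (-(y i * ⟪x i, θs⟫))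
        linarith
      linarith
  refine ⟨part1, ?_⟩
  -- ===== Part (ii) =====
  -- notation
  have hd1 : (1:ℝ) ≤ (d:ℝ) := by exact_mod_cast hd
  set M : ℝ := max 8 (2 * (n:ℝ) * r * R) with hMdef
  have hM8 : (8:ℝ) ≤ M := le_max_left _ _
  have hlog2a := Real.log_two_gt_d9
  have hlog2b := Real.log_two_lt_d9
  have hlog8 : Real.log 8 = 3 * Real.log 2 := by
    rw [show (8:ℝ) = 2 ^ (3:ℕ) by norm_num, Real.log_pow]; push_cast; ring
  have hlogM8 : 3 * Real.log 2 ≤ Real.log M := by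
    rw [← hlog8]; exact Real.log_le_log (by norm_num) hM8
  have hlogMpos : 0 < Real.log M := by nlinarith
  set s : ℝ := Real.sqrt n * r * R + Real.sqrt (r * R) with hsdef
  have hsrR : 0 < Real.sqrt (r * R) := Real.sqrt_pos.2 hrR
  have hsqn : 0 < Real.sqrt n := Real.sqrt_pos.2 (by exact_mod_cast hn)
  have hs0 : 0 < s := by
    have : 0 < Real.sqrt n * r * R := by positivity
    rw [hsdef]; linarith
  set ρ : ℝ := min (Real.sqrt (r * R)) (Δ / Real.sqrt n) with hρdef
  have hρ0 : 0 < ρ := lt_min hsrR (div_pos hΔpos hsqn)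
  have hρ1 : ρ ≤ Real.sqrt (r * R) := min_le_left _ _
  have hρ2 : ρ * Real.sqrt n ≤ Δ := by
    have h := min_le_right (Real.sqrt (r * R)) (Δ / Real.sqrt n)
    calc ρ * Real.sqrt n ≤ (Δ / Real.sqrt n) * Real.sqrt n :=
          mul_le_mul_of_nonneg_right h hsqn.le
      _ = Δ := div_mul_cancel₀ _ (ne_of_gt hsqn)
  have hρsq : ρ ^ 2 ≤ r * R := by
    have h := Real.sq_sqrt hrR.le
    nlinarith
  set U : Set (EuclideanSpace ℝ (Fin d)) := {v | ∑ i, ⟪x i, v⟫ ^ 2 ≤ 1} with hUdef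
  -- U has positive finite volume
  have hQRn : ∀ v : EuclideanSpace ℝ (Fin d),
      ∑ i, ⟪x i, v⟫ ^ 2 ≤ n * (R * ‖v‖) ^ 2 := by
    intro v
    calc ∑ i, ⟪x i, v⟫ ^ 2 ≤ ∑ _i : Fin n, (R * ‖v‖) ^ 2 := by
          apply Finset.sum_le_sum
          intro i _
          have h1 : |⟪x i, v⟫| ≤ R * ‖v‖ := by
            calc |⟪x i, v⟫| ≤ ‖x i‖ * ‖v‖ := abs_real_inner_le_norm _ _
              _ ≤ R * ‖v‖ := mul_le_mul_of_nonneg_right (hx i) (norm_nonneg _)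
          nlinarith [abs_nonneg ⟪x i, v⟫, sq_abs ⟪x i, v⟫]
      _ = n * (R * ‖v‖) ^ 2 := by
          rw [Finset.sum_const, Finset.card_univ, Fintype.card_fin, nsmul_eq_mul]
  have hUball : Metric.ball (0 : EuclideanSpace ℝ (Fin d)) (1 / (1 + Real.sqrt n * R)) ⊆ U := by
    intro v hv
    rw [mem_ball_zero_iff] at hv
    have h1 := hQRn v
    have hden : 0 < 1 + Real.sqrt n * R := by positivity
    have h3 : ‖v‖ * (1 + Real.sqrt n * R) < 1 := by
      rw [lt_div_iff₀ hden] at hv; exact hv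
    have hnn : Real.sqrt n ^ 2 = n := Real.sq_sqrt (Nat.cast_nonneg n)
    have h4 : Real.sqrt n * R * ‖v‖ < 1 := by
      nlinarith [norm_nonneg v, mul_pos hsqn hR]
    have h5 : (Real.sqrt n * R * ‖v‖) ^ 2 < 1 := by
      nlinarith [mul_nonneg (mul_nonneg hsqn.le hR.le) (norm_nonneg v)]
    have h6 : (n:ℝ) * (R * ‖v‖) ^ 2 = (Real.sqrt n * R * ‖v‖) ^ 2 := by
      linear_combination (R * ‖v‖) ^ 2 * hnn.symm
    show ∑ i, ⟪x i, v⟫ ^ 2 ≤ 1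
    linarith
  have hUbd : U ⊆ Metric.closedBall (0 : EuclideanSpace ℝ (Fin d)) (Real.sqrt (1 / lammin)) := by
    intro v hv
    have hv' : ∑ i, ⟪x i, v⟫ ^ 2 ≤ 1 := hv
    rw [Metric.mem_closedBall, dist_zero_right]
    have h2 : lammin * ‖v‖ ^ 2 ≤ 1 := le_trans (hlamQ v) hv'
    rw [Real.le_sqrt (norm_nonneg _), le_div_iff₀ hlammin]
    · nlinarith
    · positivity
  have hUpos : 0 < volume U :=
    lt_of_lt_of_le (Metric.measure_ball_pos volume 0 (by positivity)) (measure_mono hUball)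
  have hUfin : volume U < ⊤ :=
    lt_of_le_of_lt (measure_mono hUbd) measure_closedBall_lt_top
  -- B = s • U
  have hBsU : B = s • U := by
    rw [hB]
    ext θ
    simp only [Set.mem_setOf_eq, Set.mem_smul_set]
    constructor
    · intro h
      refine ⟨s⁻¹ • θ, ?_, ?_⟩
      · show ∑ i, ⟪x i, s⁻¹ • θ⟫ ^ 2 ≤ 1
        rw [llg_Qf_smul]
        have hs2 : (0:ℝ) < s ^ 2 := by positivity
        calc (s⁻¹) ^ 2 * ∑ i, ⟪x i, θ⟫ ^ 2 ≤ (s⁻¹) ^ 2 * s ^ 2 := by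
              apply mul_le_mul_of_nonneg_left h (by positivity)
          _ = 1 := by field_simp
      · rw [smul_smul, mul_inv_cancel₀ (ne_of_gt hs0), one_smul]
    · rintro ⟨v, hv, rfl⟩
      have hv' : ∑ i, ⟪x i, v⟫ ^ 2 ≤ 1 := hv
      show ∑ i, ⟪x i, s • v⟫ ^ 2 ≤ s ^ 2
      rw [llg_Qf_smul]
      nlinarith [sq_nonneg s]
  have hvolB : volume B = ENNReal.ofReal (s ^ d) * volume U := by
    rw [hBsU, llg_vol_smul, abs_of_pos hs0]
  set E0 : Set (EuclideanSpace ℝ (Fin d)) := θs +ᵥ (ρ • U) with hE0def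
  have hvolE0 : volume E0 = ENNReal.ofReal (ρ ^ d) * volume U := by
    rw [hE0def, llg_vol_vadd, llg_vol_smul, abs_of_pos hρ0]
  have hE0mem : ∀ θ ∈ E0, ∃ v : EuclideanSpace ℝ (Fin d),
      (∑ i, ⟪x i, v⟫ ^ 2 ≤ 1) ∧ θ = θs + ρ • v := by
    intro θ hθ
    rw [hE0def] at hθ
    obtain ⟨w, hw, rfl⟩ := hθ
    obtain ⟨v, hv, rfl⟩ := hw
    exact ⟨v, hv, rfl⟩
  -- the norm √Q θs is at most √n (r R)
  have hQθs : Real.sqrt (∑ i, ⟪x i, θs⟫ ^ 2) ≤ Real.sqrt n * (r * R) := by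
    have h1 : ∑ i, ⟪x i, θs⟫ ^ 2 ≤ n * (r * R) ^ 2 := by
      calc ∑ i, ⟪x i, θs⟫ ^ 2 ≤ ∑ _i : Fin n, (r * R) ^ 2 := by
            apply Finset.sum_le_sum
            intro i _
            have hab := abs_le.1 (hinner_r i θs hθs)
            nlinarith [hab.1, hab.2]
        _ = n * (r * R) ^ 2 := by
            rw [Finset.sum_const, Finset.card_univ, Fintype.card_fin, nsmul_eq_mul]
    calc Real.sqrt (∑ i, ⟪x i, θs⟫ ^ 2) ≤ Real.sqrt (n * (r * R) ^ 2) := Real.sqrt_le_sqrt h1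
      _ = Real.sqrt n * (r * R) := by
          rw [Real.sqrt_mul (Nat.cast_nonneg n), Real.sqrt_sq hrR.le]
  -- E0 ⊆ Ht Δ
  have hE0Ht : E0 ⊆ Ht Δ := by
    intro θ hθ
    obtain ⟨v, hv, rfl⟩ := hE0mem θ hθ
    rw [hHt]
    constructor
    · rw [hHA]
      refine ⟨θs, hθs, ?_⟩
      have he : θs + ρ • v - θs = ρ • v := by abel
      rw [he, llg_Qf_smul]
      nlinarith [llg_Qf_nonneg x v]
    · have hsum : L (θs + ρ • v) - L θs ≤ ∑ i, |⟪x i, ρ • v⟫| := by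
        rw [hL' (θs + ρ • v), hL' θs, ← Finset.sum_sub_distrib]
        apply Finset.sum_le_sum
        intro i _
        have hlip := llg_lip (-(y i * ⟪x i, θs + ρ • v⟫)) (-(y i * ⟪x i, θs⟫))
        have harg : -(y i * ⟪x i, θs + ρ • v⟫) - -(y i * ⟪x i, θs⟫) =
            -(y i * ⟪x i, ρ • v⟫) := by
          rw [inner_add_right]; ring
        rw [harg, habsy] at hlip
        exact hlip
      have hCS := llg_Qf_sum_abs_le x (ρ • v)
      have hQρv : ∑ i, ⟪x i, ρ • v⟫ ^ 2 ≤ ρ ^ 2 := by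
        rw [llg_Qf_smul]; nlinarith [sq_nonneg ρ]
      have h5 : Real.sqrt ((n:ℝ) * ∑ i, ⟪x i, ρ • v⟫ ^ 2) ≤ Real.sqrt ((n:ℝ) * ρ ^ 2) :=
        Real.sqrt_le_sqrt (mul_le_mul_of_nonneg_left hQρv (Nat.cast_nonneg n))
      have h6 : Real.sqrt ((n:ℝ) * ρ ^ 2) = Real.sqrt n * ρ := by
        rw [Real.sqrt_mul (Nat.cast_nonneg n), Real.sqrt_sq hρ0.le]
      have h7 : Real.sqrt n * ρ ≤ Δ := by rw [mul_comm]; exact hρ2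
      linarith
  -- E0 ⊆ B
  have hE0B : E0 ⊆ B := by
    intro θ hθ
    obtain ⟨v, hv, rfl⟩ := hE0mem θ hθ
    rw [hB]
    show ∑ i, ⟪x i, θs + ρ • v⟫ ^ 2 ≤ s ^ 2
    have htri := llg_Qf_tri x θs (ρ • v)
    have h1 : Real.sqrt (∑ i, ⟪x i, ρ • v⟫ ^ 2) ≤ ρ := by
      have hQρv : ∑ i, ⟪x i, ρ • v⟫ ^ 2 ≤ ρ ^ 2 := by
        rw [llg_Qf_smul]; nlinarith [sq_nonneg ρ]
      calc Real.sqrt (∑ i, ⟪x i, ρ • v⟫ ^ 2) ≤ Real.sqrt (ρ ^ 2) := Real.sqrt_le_sqrt hQρv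
        _ = ρ := Real.sqrt_sq hρ0.le
    have h2 : Real.sqrt (∑ i, ⟪x i, θs⟫ ^ 2) + Real.sqrt (∑ i, ⟪x i, ρ • v⟫ ^ 2) ≤ s := by
      rw [hsdef]
      have := hQθs
      have : Real.sqrt n * (r * R) = Real.sqrt n * r * R := by ring
      linarith [hQθs, h1, hρ1]
    nlinarith [Real.sqrt_nonneg (∑ i, ⟪x i, θs⟫ ^ 2),
      Real.sqrt_nonneg (∑ i, ⟪x i, ρ • v⟫ ^ 2), llg_Qf_nonneg x (θs + ρ • v)]
  -- the monotone measure sequence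
  set g : ℕ → ENNReal := fun j => volume (Ht ((j:ℝ) * Δ) ∩ B) with hgdef
  have hHtmono : ∀ t t' : ℝ, t ≤ t' → Ht t ⊆ Ht t' := by
    intro t t' h θ hθ
    rw [hHt] at hθ ⊢
    exact ⟨hθ.1, le_trans hθ.2 (by linarith)⟩
  have hgmono : Monotone g := by
    intro j j' hjj
    apply measure_mono
    apply Set.inter_subset_inter_left
    apply hHtmono
    have hc : (j:ℝ) ≤ (j':ℝ) := by exact_mod_cast hjj
    nlinarith
  have hg1 : ENNReal.ofReal (ρ ^ d) * volume U ≤ g 1 := by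
    rw [← hvolE0]
    apply measure_mono
    intro θ hθ
    constructor
    · have hΔ1 : ((1:ℕ):ℝ) * Δ = Δ := by norm_num
      rw [hΔ1]
      exact hE0Ht hθ
    · exact hE0B hθ
  have hgC : ∀ j, g j ≤ ENNReal.ofReal (s ^ d) * volume U := by
    intro j
    rw [← hvolB]
    exact measure_mono Set.inter_subset_right
  -- the bad set and its chain bound
  have hchain : ∀ T : Finset ℕ,
      (∀ k ∈ T, 1 ≤ k ∧ k ≤ N ∧ 2 * g (k - 1) < g (k + 1)) →
      (∀ k ∈ T, 2 ≤ k) → (∀ k ∈ T, ∀ l ∈ T, k % 2 = l % 2) →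
      (2:ℝ) ^ T.card * ρ ^ d ≤ s ^ d := by
    intro T hTprop h2 hpar
    have hch := llg_chain g hgmono _ hg1 T h2 hpar
      (fun k hk => (hTprop k hk).2.2) N (fun k hk => (hTprop k hk).2.1)
    have h2' := le_trans hch (hgC (N + 1))
    rw [← mul_assoc] at h2'
    have hcan := (ENNReal.mul_le_mul_iff_left (ne_of_gt hUpos) (ne_of_lt hUfin)).1 h2'
    have h2pow : (2:ENNReal) ^ T.card = ENNReal.ofReal ((2:ℝ) ^ T.card) := by
      rw [ENNReal.ofReal_pow (by norm_num : (0:ℝ) ≤ 2)]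
      norm_num
    rw [h2pow, ← ENNReal.ofReal_mul (by positivity : (0:ℝ) ≤ (2:ℝ) ^ T.card)] at hcan
    exact (ENNReal.ofReal_le_ofReal_iff (pow_nonneg hs0.le d)).1 hcan
  -- ratio bound
  set u : ℝ := Real.sqrt ((n:ℝ) * r * R) with hudef
  have hu0 : 0 ≤ u := Real.sqrt_nonneg _
  have hu2 : u ^ 2 = (n:ℝ) * r * R := Real.sq_sqrt (by positivity)
  have husplit : u = Real.sqrt n * Real.sqrt (r * R) := by
    rw [hudef, show (n:ℝ) * r * R = (n:ℝ) * (r * R) by ring,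
      Real.sqrt_mul (Nat.cast_nonneg n)]
  have hs_le : s ≤ ρ * (1 + u) ^ 2 := by
    have hrr2 : Real.sqrt (r * R) ^ 2 = r * R := Real.sq_sqrt hrR.le
    have hA : s ≤ Real.sqrt (r * R) * (1 + u) ^ 2 := by
      have h1 : Real.sqrt n * r * R = Real.sqrt (r * R) * u := by
        rw [husplit]; nlinarith
      rw [hsdef]
      nlinarith [hsrR, hu0]
    have hB2 : s * Real.sqrt n ≤ Δ * (1 + u) ^ 2 := by
      have h1 : Real.sqrt n * Real.sqrt n = (n:ℝ) := Real.mul_self_sqrt (Nat.cast_nonneg n)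
      have h2 : Real.sqrt (r * R) * Real.sqrt n = u := by rw [husplit]; ring
      have h3 : s * Real.sqrt n = u ^ 2 + u := by
        rw [hsdef, hu2]; nlinarith
      rw [h3]
      nlinarith [hu0, hΔge, hrR]
    rcases min_cases (Real.sqrt (r * R)) (Δ / Real.sqrt n) with ⟨hmin, _⟩ | ⟨hmin, _⟩
    · rw [hρdef, hmin]; exact hA
    · rw [hρdef, hmin, div_mul_eq_mul_div, le_div_iff₀ hsqn]
      linarith [hB2]
  have hratio : ∀ c : ℕ, (2:ℝ) ^ c * ρ ^ d ≤ s ^ d →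
      (c:ℝ) * Real.log 2 ≤ (6/5) * (d:ℝ) * Real.log M := by
    intro c hc
    have h1 : s ^ d ≤ (ρ * (1 + u) ^ 2) ^ d := pow_le_pow_left₀ hs0.le hs_le d
    have h2 : (2:ℝ) ^ c ≤ ((1 + u) ^ 2) ^ d := by
      have hρd : (0:ℝ) < ρ ^ d := by positivity
      have h := le_trans hc h1
      rw [mul_pow, mul_comm (ρ ^ d)] at h
      nlinarith [pow_pos hρ0 d, pow_pos (show (0:ℝ) < 2 by norm_num) c]
    have h3 : (c:ℝ) * Real.log 2 ≤ 2 * (d:ℝ) * Real.log (1 + u) := by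
      have e1 : (c:ℝ) * Real.log 2 = Real.log ((2:ℝ) ^ c) := by rw [Real.log_pow]
      have e2 : Real.log (((1 + u) ^ 2) ^ d) = 2 * (d:ℝ) * Real.log (1 + u) := by
        rw [Real.log_pow, Real.log_pow]; push_cast; ring
      rw [e1, ← e2]
      exact Real.log_le_log (by positivity) h2
    have h4 : Real.log (1 + u) ≤ (3/5) * Real.log M := by
      have hnum := llg_numeric ((n:ℝ) * r * R) (by positivity)
      have hMeq : max (8:ℝ) (2 * ((n:ℝ) * r * R)) = M := by
        rw [hMdef]
        congr 1
        ring
      rw [hMeq, ← hudef] at hnum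
      have h10 : 10 * Real.log (1 + u) ≤ 6 * Real.log M := by
        have e1 : Real.log ((1 + u) ^ 10) = 10 * Real.log (1 + u) := by
          rw [Real.log_pow]; push_cast; ring
        have e2 : Real.log (M ^ 6) = 6 * Real.log M := by
          rw [Real.log_pow]; push_cast; ring
        rw [← e1, ← e2]
        exact Real.log_le_log (by positivity) hnum
      linarith
    calc (c:ℝ) * Real.log 2 ≤ 2 * (d:ℝ) * Real.log (1 + u) := h3
      _ ≤ 2 * (d:ℝ) * ((3/5) * Real.log M) := by
          apply mul_le_mul_of_nonneg_left h4 (by positivity)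
      _ = (6/5) * (d:ℝ) * Real.log M := by ring
  -- the bad set
  set bad : Finset ℕ := (Finset.Icc 1 N).filter (fun k : ℕ =>
    2 * μB (Ht ((k : ℝ) * Δ - Δ)) < μB (Ht ((k : ℝ) * Δ + Δ))) with hbaddef
  have hbadprop : ∀ k ∈ bad, 1 ≤ k ∧ k ≤ N ∧ 2 * g (k - 1) < g (k + 1) := by
    intro k hk
    rw [hbaddef, Finset.mem_filter, Finset.mem_Icc] at hk
    obtain ⟨⟨hk1, hkN⟩, hklt⟩ := hk
    refine ⟨hk1, hkN, ?_⟩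
    have e1 : ((k - 1 : ℕ):ℝ) * Δ = (k:ℝ) * Δ - Δ := by
      rw [Nat.cast_sub hk1]; push_cast; ring
    have e2 : ((k + 1 : ℕ):ℝ) * Δ = (k:ℝ) * Δ + Δ := by push_cast; ring
    rw [hμB, hμB] at hklt
    show 2 * volume (Ht ((↑(k - 1):ℝ) * Δ) ∩ B) < volume (Ht ((↑(k + 1):ℝ) * Δ) ∩ B)
    rw [e1, e2]
    exact hklt
  set badE : Finset ℕ := bad.filter (fun k => k % 2 = 0) with hbadEdef
  set badO : Finset ℕ := bad.filter (fun k => k % 2 = 1 ∧ k ≠ 1) with hbadOdef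
  have hsplitbad : bad ⊆ badE ∪ badO ∪ {1} := by
    intro k hk
    have hk1 : 1 ≤ k := (hbadprop k hk).1
    simp only [hbadEdef, hbadOdef, Finset.mem_union, Finset.mem_filter,
      Finset.mem_singleton]
    rcases Nat.mod_two_eq_zero_or_one k with h | h
    · exact Or.inl (Or.inl ⟨hk, h⟩)
    · rcases eq_or_ne k 1 with rfl | hne
      · exact Or.inr rfl
      · exact Or.inl (Or.inr ⟨hk, h, hne⟩)
  have hcardsplit : bad.card ≤ badE.card + badO.card + 1 := by
    calc bad.card ≤ (badE ∪ badO ∪ {1}).card := Finset.card_le_card hsplitbad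
      _ ≤ (badE ∪ badO).card + ({1} : Finset ℕ).card := Finset.card_union_le _ _
      _ ≤ badE.card + badO.card + 1 := by
          have := Finset.card_union_le badE badO
          simp only [Finset.card_singleton]
          omega
  have hcE : ((badE.card : ℝ)) * Real.log 2 ≤ (6/5) * (d:ℝ) * Real.log M := by
    apply hratio
    apply hchain badE
    · intro k hk
      exact hbadprop k (Finset.mem_of_mem_filter k hk)
    · intro k hk
      rw [hbadEdef, Finset.mem_filter] at hk
      have := (hbadprop k hk.1).1
      omega
    · intro k hk l hl
      rw [hbadEdef, Finset.mem_filter] at hk hl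
      omega
  have hcO : ((badO.card : ℝ)) * Real.log 2 ≤ (6/5) * (d:ℝ) * Real.log M := by
    apply hratio
    apply hchain badO
    · intro k hk
      exact hbadprop k (Finset.mem_of_mem_filter k hk)
    · intro k hk
      rw [hbadOdef, Finset.mem_filter] at hk
      have := (hbadprop k hk.1).1
      omega
    · intro k hk l hl
      rw [hbadOdef, Finset.mem_filter] at hk hl
      omega
  -- the final numeric bound on the number of bad tolerances
  have hfinal2 : (bad.card : ℝ) ≤ 4 * (d:ℝ) * Real.log M := by
    have hl2pos : (0:ℝ) < Real.log 2 := by linarith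
    have hcard : (bad.card : ℝ) ≤ (badE.card : ℝ) + (badO.card : ℝ) + 1 := by
      exact_mod_cast hcardsplit
    have hbl2 : (bad.card : ℝ) * Real.log 2 ≤
        (12/5) * (d:ℝ) * Real.log M + Real.log 2 := by
      have := mul_le_mul_of_nonneg_right hcard hl2pos.le
      nlinarith
    have hG : 3 * Real.log 2 ≤ (d:ℝ) * Real.log M := by
      calc 3 * Real.log 2 ≤ Real.log M := hlogM8
        _ = 1 * Real.log M := by ring
        _ ≤ (d:ℝ) * Real.log M := mul_le_mul_of_nonneg_right hd1 hlogMpos.le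
    have hkey : (12/5) * (d:ℝ) * Real.log M + Real.log 2 ≤
        (4 * (d:ℝ) * Real.log M) * Real.log 2 := by
      nlinarith [hG, hlog2a, hlog2b, hlogMpos, hd1]
    have := le_trans hbl2 hkey
    exact le_of_mul_le_mul_right this hl2pos
  have hgoal2 : ((((Finset.Icc 1 N).filter fun k : ℕ =>
      2 * μB (Ht ((k : ℝ) * Δ - Δ)) < μB (Ht ((k : ℝ) * Δ + Δ))).card : ℝ)
      ≤ 4 * (d : ℝ) * Real.log (max 8 (2 * ↑n * r * R))) := by
    exact hfinal2
  refine ⟨hgoal2, ?_⟩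
  -- part three: the good set is large
  have hIccN : (Finset.Icc 1 N).card = N := by
    rw [Nat.card_Icc]
    omega
  have hcompl : (((Finset.Icc 1 N).filter fun k : ℕ =>
      μB (Ht ((k : ℝ) * Δ + Δ)) ≤ 2 * μB (Ht ((k : ℝ) * Δ - Δ))).card) + bad.card = N := by
    rw [hbaddef]
    have hfeq : ((Finset.Icc 1 N).filter fun k : ℕ =>
        μB (Ht ((k : ℝ) * Δ + Δ)) ≤ 2 * μB (Ht ((k : ℝ) * Δ - Δ))) =
        ((Finset.Icc 1 N).filter fun k : ℕ =>
        ¬ (2 * μB (Ht ((k : ℝ) * Δ - Δ)) < μB (Ht ((k : ℝ) * Δ + Δ)))) := by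
      apply Finset.filter_congr
      intro k _
      exact not_lt.symm
    rw [hfeq, add_comm]
    rw [Finset.card_filter_add_card_filter_not]
    exact hIccN
  have hbadN : bad.card ≤ N := by
    calc bad.card ≤ (Finset.Icc 1 N).card := Finset.card_filter_le _ _
      _ = N := hIccN
  have hNge : 16 * (d:ℝ) * Real.log M ≤ (N:ℝ) := by
    rw [hN]
    exact Nat.le_ceil _
  have hcomplR : (((Finset.Icc 1 N).filter fun k : ℕ =>
      μB (Ht ((k : ℝ) * Δ + Δ)) ≤ 2 * μB (Ht ((k : ℝ) * Δ - Δ))).card : ℝ) +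
      (bad.card:ℝ) = (N:ℝ) := by
    exact_mod_cast hcompl
  have hquarter : (bad.card : ℝ) ≤ (N:ℝ) / 4 := by
    calc (bad.card : ℝ) ≤ 4 * (d:ℝ) * Real.log M := hfinal2
      _ ≤ (N:ℝ) / 4 := by linarith
  linarith
end

section
/- From transductive LOO bounds to generalization in expectation: Let 𝒜 be a transductive algorithm which, given a finite multiset of labeled examples and the multiset of all n covariates, outputs a prediction at each covariate; assume 𝒜 depends on its inputs only through these multisets, and that all maps below are measurable. Suppose there exist constants C > 1 and Comp ≥ 0 such that for every m ≥ 1 and every deterministic sequence S = ((x_1,y_1),…,(x_m,y_m)), (1/m) Σ_{i=1}^m ℓ(𝒜(S∖{(x_i,y_i)}; {x_1,…,x_m})(x_i), y_i) ≤ C·(1/m)·min_{h∈ℋ} Σ_{i=1}^m ℓ(h(x_i), y_i) + Comp/m. Let (X_1,Y_1),…,(X_n,Y_n),(X,Y) be i.i.d. with distribution 𝒟, and define h̃(X) = 𝒜(((X_1,Y_1),…,(X_n,Y_n)); {X_1,…,X_n,X})(X). Then E[ℓ(h̃(X), Y)] ≤ C·min_{h∈ℋ} E[ℓ(h(X), Y)]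 + Comp/(n+1). -/
open MeasureTheory
open scoped ENNReal

/-!
The sample is exchangeable, so the loss of the predictor trained on the first `n` points and
queried at the last one has the same expectation as each of the `n + 1` transductive
leave-one-out losses of the whole sample, hence as their mean. The deterministic LOO bound
controls that mean by `C` times the empirical risk of an empirical risk minimiser, which is at
most the empirical risk of the fixed comparator `gpop`, and the expectation of the latter is its
population risk.
-/

namespace Multiset

theorem coe_ofFn_comp_perm {β : Type*} {m : ℕ} (σ : Equiv.Perm (Fin m)) (f : Fin m → β) :
    (List.ofFn (f ∘ σ) : Multiset β) = List.ofFn f :=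
  coe_eq_coe.2 (σ.ofFn_comp_perm f)

theorem coe_ofFn_castSucc {β : Type*} [DecidableEq β] (m : ℕ) (f : Fin (m + 1) → β) :
    (List.ofFn (fun i : Fin m => f i.castSucc) : Multiset β) =
      (List.ofFn f : Multiset β).erase (f (Fin.last m)) := by
  rw [List.ofFn_succ', List.concat_eq_append, ← coe_add, coe_singleton, add_comm, singleton_add,
    erase_cons_head]

end Multiset

section Exchangeability

variable {ι α : Type*} [Fintype ι] [MeasurableSpace α] (μ : Measure α)

theorem lintegral_comp_perm_pi [SigmaFinite μ] (σ : Equiv.Perm ι) (f : (ι → α) → ℝ≥0∞) :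
    ∫⁻ ω, f (ω ∘ σ) ∂Measure.pi (fun _ => μ) = ∫⁻ ω, f ω ∂Measure.pi (fun _ => μ) := by
  have hσ := measurePreserving_piCongrLeft (fun _ : ι => μ) σ.symm
  have hσω : ∀ ω : ι → α, MeasurableEquiv.piCongrLeft (fun _ => α) σ.symm ω = ω ∘ σ :=
    fun ω => funext fun i => by
      simpa using MeasurableEquiv.piCongrLeft_apply_apply (β := fun _ => α) σ.symm ω (σ i)
  simpa only [hσω] using hσ.lintegral_comp_emb (MeasurableEquiv.measurableEmbedding _) f

theorem sum_lintegral_le_lintegral_sum {κ β : Type*} [MeasurableSpace β] (ν : Measure β)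
    (s : Finset κ) (f : κ → β → ℝ≥0∞) :
    ∑ i ∈ s, ∫⁻ x, f i x ∂ν ≤ ∫⁻ x, ∑ i ∈ s, f i x ∂ν := by
  classical
  induction s using Finset.induction_on with
  | empty => simp
  | insert i s hi ih =>
    simp only [Finset.sum_insert hi]
    exact (add_le_add le_rfl ih).trans (le_lintegral_add _ _)

theorem card_mul_lintegral_le_lintegral_sum_of_comp_perm [SigmaFinite μ] [DecidableEq ι]
    (T : ι → (ι → α) → ℝ≥0∞) (hT : ∀ (σ : Equiv.Perm ι) i ω, T i (ω ∘ σ) = T (σ i) ω) (i : ι) :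
    Fintype.card ι * ∫⁻ ω, T i ω ∂Measure.pi (fun _ => μ) ≤
      ∫⁻ ω, ∑ j, T j ω ∂Measure.pi (fun _ => μ) := by
  have hTj : ∀ j, ∫⁻ ω, T j ω ∂Measure.pi (fun _ => μ) = ∫⁻ ω, T i ω ∂Measure.pi (fun _ => μ) :=
    fun j => by
      rw [← lintegral_comp_perm_pi μ (Equiv.swap i j)]
      simp [hT]
  calc (Fintype.card ι : ℝ≥0∞) * ∫⁻ ω, T i ω ∂Measure.pi (fun _ => μ)
      = ∑ j, ∫⁻ ω, T j ω ∂Measure.pi (fun _ => μ) := by simp [hTj]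
    _ ≤ _ := sum_lintegral_le_lintegral_sum _ _ _

theorem lintegral_sum_comp_eval_pi [IsProbabilityMeasure μ] {f : α → ℝ≥0∞} (hf : Measurable f) :
    ∫⁻ ω, ∑ i, f (ω i) ∂Measure.pi (fun _ : ι => μ) = Fintype.card ι * ∫⁻ x, f x ∂μ := by
  rw [lintegral_finsetSum Finset.univ (f := fun i (ω : ι → α) => f (ω i))
    fun i _ => by fun_prop]
  simp [(measurePreserving_eval (fun _ : ι => μ) _).lintegral_comp hf]

end Exchangeability

theorem ENNReal.le_add_div_of_mul_le {a b c k : ℝ≥0∞} (hk₀ : k ≠ 0) (hk : k ≠ ∞)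
    (h : k * a ≤ k * b + c) : a ≤ b + c / k := by
  rwa [← ENNReal.mul_le_mul_iff_right hk₀ hk, mul_add, ENNReal.mul_div_cancel hk₀ hk]

section TransductiveLOO

variable {𝒳 𝒴 𝒴' : Type*} [DecidableEq (𝒳 × 𝒴)]
  (ℓ : 𝒴' → 𝒴 → ℝ) (𝒜 : Multiset (𝒳 × 𝒴) → Multiset 𝒳 → 𝒳 → 𝒴')

def looLoss {m : ℕ} (S : Fin m → 𝒳 × 𝒴) (i : Fin m) : ℝ :=
  ℓ (𝒜 ((Multiset.ofList (List.ofFn S)).erase (S i))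
      (Multiset.ofList (List.ofFn fun j => (S j).1)) (S i).1) (S i).2

theorem looLoss_comp_perm {m : ℕ} (σ : Equiv.Perm (Fin m)) (S : Fin m → 𝒳 × 𝒴) (i : Fin m) :
    looLoss ℓ 𝒜 (S ∘ σ) i = looLoss ℓ 𝒜 S (σ i) := by
  unfold looLoss
  rw [Multiset.coe_ofFn_comp_perm σ S, ← Multiset.coe_ofFn_comp_perm σ fun j => (S j).1]
  rfl

theorem looLoss_last {n : ℕ} (S : Fin (n + 1) → 𝒳 × 𝒴) :
    looLoss ℓ 𝒜 S (Fin.last n) =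
      ℓ (𝒜 (Multiset.ofList (List.ofFn fun i : Fin n => S i.castSucc))
          (Multiset.ofList (List.ofFn fun j => (S j).1)) (S (Fin.last n)).1)
        (S (Fin.last n)).2 := by
  rw [looLoss, Multiset.coe_ofFn_castSucc]

end TransductiveLOO

theorem sum_ofReal_le_of_mean_le {m : ℕ} (hm : 0 < m) {a b : Fin m → ℝ} (ha : ∀ i, 0 ≤ a i)
    (hb : ∀ i, 0 ≤ b i) {C Comp : ℝ} (hC : 0 ≤ C)
    (h : 1 / (m : ℝ) * ∑ i, a i ≤ C * (1 / (m : ℝ) * ∑ i, b i) + Comp / m) :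
    ∑ i, ENNReal.ofReal (a i) ≤
      ENNReal.ofReal C * ∑ i, ENNReal.ofReal (b i) + ENNReal.ofReal Comp := by
  have hsum : ∑ i, a i ≤ C * ∑ i, b i + Comp := by
    have hm' : (0 : ℝ) < m := Nat.cast_pos.2 hm
    field_simp at h
    exact h
  rw [← ENNReal.ofReal_sum_of_nonneg fun i _ => ha i,
    ← ENNReal.ofReal_sum_of_nonneg fun i _ => hb i, ← ENNReal.ofReal_mul hC]
  exact (ENNReal.ofReal_le_ofReal hsum).trans ENNReal.ofReal_add_le

theorem transductive_loo_to_generalization_general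
    {𝒳 𝒴 𝒴' H : Type*} [MeasurableSpace 𝒳] [MeasurableSpace 𝒴]
    [DecidableEq (𝒳 × 𝒴)]
    (eval : H → 𝒳 → 𝒴') (ℓ : 𝒴' → 𝒴 → ℝ)
    (hℓ : ∀ (a : 𝒴') (b : 𝒴), 0 ≤ ℓ a b)
    (𝒜 : Multiset (𝒳 × 𝒴) → Multiset 𝒳 → 𝒳 → 𝒴')
    (C Comp : ℝ) (hC : 1 < C)
    -- empirical minimizers exist (e.g. ℋ finite)
    (hERM : ∀ (m : ℕ) (S : Fin m → 𝒳 × 𝒴), ∃ gS : H,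
      ∀ h : H, ∑ i, ℓ (eval gS (S i).1) (S i).2 ≤ ∑ i, ℓ (eval h (S i).1) (S i).2)
    -- transductive LOO oracle inequality for every deterministic sequence
    (hLOO : ∀ (m : ℕ), 1 ≤ m → ∀ (S : Fin m → 𝒳 × 𝒴) (gS : H),
      (∀ h : H, ∑ i, ℓ (eval gS (S i).1) (S i).2 ≤ ∑ i, ℓ (eval h (S i).1) (S i).2) →
      (1 / (m : ℝ)) * ∑ i, ℓ
          (𝒜 ((Multiset.ofList (List.ofFn S)).erase (S i))
            (Multiset.ofList (List.ofFn fun j : Fin m => (S j).1)) (S i).1) (S i).2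
        ≤ C * ((1 / (m : ℝ)) * ∑ i, ℓ (eval gS (S i).1) (S i).2) + Comp / (m : ℝ))
    (n : ℕ)
    (𝒟 : Measure (𝒳 × 𝒴)) [IsProbabilityMeasure 𝒟]
    (gpop : H)
    -- measurability of the relevant maps
    (hmeash : ∀ h : H, Measurable fun z : 𝒳 × 𝒴 => ℓ (eval h z.1) z.2) :
    (∫⁻ ω : Fin (n + 1) → 𝒳 × 𝒴, ENNReal.ofReal
        (ℓ (𝒜 (Multiset.ofList (List.ofFn fun i : Fin n => ω i.castSucc))
              (Multiset.ofList (List.ofFn fun j : Fin (n + 1) => (ω j).1))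
              (ω (Fin.last n)).1)
           (ω (Fin.last n)).2)
        ∂(Measure.pi fun _ : Fin (n + 1) => 𝒟))
      ≤ ENNReal.ofReal C * (∫⁻ z : 𝒳 × 𝒴, ENNReal.ofReal (ℓ (eval gpop z.1) z.2) ∂𝒟)
          + ENNReal.ofReal (Comp / (n + 1 : ℝ)) := by
  set π := Measure.pi fun _ : Fin (n + 1) => 𝒟
  set g : 𝒳 × 𝒴 → ℝ≥0∞ := fun z => ENNReal.ofReal (ℓ (eval gpop z.1) z.2)
  have hpointwise : ∀ ω : Fin (n + 1) → 𝒳 × 𝒴, ∑ i, ENNReal.ofReal (looLoss ℓ 𝒜 ω i) ≤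
      ENNReal.ofReal C * ∑ i, g (ω i) + ENNReal.ofReal Comp := by
    intro ω
    obtain ⟨gS, hgS⟩ := hERM (n + 1) ω
    have hC₀ : 0 ≤ C := zero_le_one.trans hC.le
    refine sum_ofReal_le_of_mean_le n.succ_pos (fun i => hℓ _ _) (fun i => hℓ _ _) hC₀ ?_
    calc _ ≤ _ := hLOO (n + 1) le_add_self ω gS hgS
      _ ≤ _ := by gcongr C * (_ * ?_) + _; exact hgS gpop
  have hexch := card_mul_lintegral_le_lintegral_sum_of_comp_perm 𝒟
    (fun i ω => ENNReal.ofReal (looLoss ℓ 𝒜 ω i))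
    (fun σ i ω => by rw [looLoss_comp_perm]) (Fin.last n)
  have hrisk : ∫⁻ ω, ENNReal.ofReal C * ∑ i, g (ω i) + ENNReal.ofReal Comp ∂π =
      ENNReal.ofReal C * ((n + 1 : ℕ) * ∫⁻ z, g z ∂𝒟) + ENNReal.ofReal Comp := by
    have hg : Measurable g := (hmeash gpop).ennreal_ofReal
    rw [lintegral_add_right _ measurable_const, lintegral_const_mul _ (by fun_prop),
      lintegral_sum_comp_eval_pi 𝒟 hg]
    simp
  have hn : ENNReal.ofReal (n + 1 : ℝ) = (n + 1 : ℕ) := by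
    rw [← ENNReal.ofReal_natCast, Nat.cast_succ]
  simp_rw [← looLoss_last]
  rw [ENNReal.ofReal_div_of_pos (by positivity), hn]
  refine ENNReal.le_add_div_of_mul_le (by simp) (by simp) ?_
  calc _ ≤ _ := by simpa only [Fintype.card_fin] using hexch
    _ ≤ _ := lintegral_mono hpointwise
    _ = _ := by rw [hrisk, mul_left_comm]

/-- **From transductive LOO bounds to generalization in expectation.**
`𝒜` takes a multiset of labeled examples and the multiset of all covariates and outputs a
prediction at each covariate (so it depends on its inputs only through these multisets).
If for every `m ≥ 1` and every deterministic sequence `S` of `m` labeled points the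
transductive LOO error of `𝒜` is at most `C·(ERM loss)/m + Comp/m`, then for an i.i.d.
sample of size `n+1` from `𝒟` (the first `n` points used for training, the last as the
test point), the expected loss of the resulting predictor is at most
`C·min_{h∈ℋ} E[ℓ(h(X),Y)] + Comp/(n+1)`.  Expectations of the nonnegative loss are
expressed as lower Lebesgue integrals. -/
theorem transductive_loo_to_generalization
    {𝒳 𝒴 𝒴' H : Type*} [MeasurableSpace 𝒳] [MeasurableSpace 𝒴]
    [DecidableEq (𝒳 × 𝒴)]
    (eval : H → 𝒳 → 𝒴') (ℓ : 𝒴' → 𝒴 → ℝ)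
    (hℓ : ∀ (a : 𝒴') (b : 𝒴), 0 ≤ ℓ a b)
    (𝒜 : Multiset (𝒳 × 𝒴) → Multiset 𝒳 → 𝒳 → 𝒴')
    (C Comp : ℝ) (hC : 1 < C) (hComp : 0 ≤ Comp)
    -- empirical minimizers exist (e.g. ℋ finite)
    (hERM : ∀ (m : ℕ) (S : Fin m → 𝒳 × 𝒴), ∃ gS : H,
      ∀ h : H, ∑ i, ℓ (eval gS (S i).1) (S i).2 ≤ ∑ i, ℓ (eval h (S i).1) (S i).2)
    -- transductive LOO oracle inequality for every deterministic sequence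
    (hLOO : ∀ (m : ℕ), 1 ≤ m → ∀ (S : Fin m → 𝒳 × 𝒴) (gS : H),
      (∀ h : H, ∑ i, ℓ (eval gS (S i).1) (S i).2 ≤ ∑ i, ℓ (eval h (S i).1) (S i).2) →
      (1 / (m : ℝ)) * ∑ i, ℓ
          (𝒜 ((Multiset.ofList (List.ofFn S)).erase (S i))
            (Multiset.ofList (List.ofFn fun j : Fin m => (S j).1)) (S i).1) (S i).2
        ≤ C * ((1 / (m : ℝ)) * ∑ i, ℓ (eval gS (S i).1) (S i).2) + Comp / (m : ℝ))
    (n : ℕ)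
    (𝒟 : Measure (𝒳 × 𝒴)) [IsProbabilityMeasure 𝒟]
    -- a minimizer of the population risk over ℋ
    (gpop : H)
    (hgpop : ∀ h : H,
      (∫⁻ z : 𝒳 × 𝒴, ENNReal.ofReal (ℓ (eval gpop z.1) z.2) ∂𝒟)
        ≤ ∫⁻ z : 𝒳 × 𝒴, ENNReal.ofReal (ℓ (eval h z.1) z.2) ∂𝒟)
    -- measurability of the relevant maps
    (hmeasA : Measurable fun ω : Fin (n + 1) → 𝒳 × 𝒴 =>
      ℓ (𝒜 (Multiset.ofList (List.ofFn fun i : Fin n => ω i.castSucc))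
          (Multiset.ofList (List.ofFn fun j : Fin (n + 1) => (ω j).1))
          (ω (Fin.last n)).1)
        (ω (Fin.last n)).2)
    (hmeash : ∀ h : H, Measurable fun z : 𝒳 × 𝒴 => ℓ (eval h z.1) z.2) :
    (∫⁻ ω : Fin (n + 1) → 𝒳 × 𝒴, ENNReal.ofReal
        (ℓ (𝒜 (Multiset.ofList (List.ofFn fun i : Fin n => ω i.castSucc))
              (Multiset.ofList (List.ofFn fun j : Fin (n + 1) => (ω j).1))
              (ω (Fin.last n)).1)
           (ω (Fin.last n)).2)
        ∂(Measure.pi fun _ : Fin (n + 1) => 𝒟))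
      ≤ ENNReal.ofReal C * (∫⁻ z : 𝒳 × 𝒴, ENNReal.ofReal (ℓ (eval gpop z.1) z.2) ∂𝒟)
          + ENNReal.ofReal (Comp / (n + 1 : ℝ)) :=
  transductive_loo_to_generalization_general eval ℓ hℓ 𝒜 C Comp hC hERM hLOO n 𝒟 gpop hmeash
end
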